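/- arXiv:2012.10370 — 5 statements merged into one kernel-verified Lean document; each statement's English description precedes it below -/
import Mathlib

section
/- Let X be a square-integrable random vector in ℝ^d with law μ and let X̂ = Proj_Γ(X) be its nearest-neighbour projection onto a quadratic optimal N-quantizer Γ of μ. Then E[X | X̂] = X̂; in particular the law μ̂ of X̂ is smaller than μ in the convex order. -/
/-!
Replace one code point `a` of `Γ` by `a + t • S`, where `S = ∫_{f⁻¹{a}} (x - a) dμ`, and send the
cell `f⁻¹{a}` to the new point while the other cells keep theirs. On that cell the quadratic
error changes by `-2t‖S‖² + μ(f⁻¹{a}) t²‖S‖²`, which is negative for small `t > 0` unless `S = 0`;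
so optimality forces every cell to have its code point as barycentre. As `f` is constant on cells,
this is `E[X | f X] = f X`, and Jensen's inequality on each cell gives the convex order.
-/

open MeasureTheory Set

noncomputable section

abbrev Ed (d : ℕ) := EuclideanSpace ℝ (Fin d)

variable {E : Type*} [NormedAddCommGroup E] [NormedSpace ℝ E] [MeasurableSpace E] [BorelSpace E]

/-- A coupling between `μ` and `ν`. -/
def IsCoupling (π : Measure (E × E)) (μ ν : Measure E) : Prop :=
  π.map Prod.fst = μ ∧ π.map Prod.snd = ν

/-- A martingale coupling between `μ` and `ν` : a probability coupling such that the
conditional expectation of the second coordinate given the first is the first. -/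
def IsMartingaleCoupling (π : Measure (E × E)) (μ ν : Measure E) : Prop :=
  IsProbabilityMeasure π ∧ IsCoupling π μ ν ∧
    ∀ A : Set E, MeasurableSet A →
      ∫ q in A ×ˢ (univ : Set E), (q.2 - q.1) ∂π = 0

/-- The convex order `μ ≤_cvx ν`. -/
def ConvexOrder (μ ν : Measure E) : Prop :=
  ∀ φ : E → ℝ, ConvexOn ℝ univ φ → Integrable φ μ → Integrable φ ν →
    ∫ x, φ x ∂μ ≤ ∫ x, φ x ∂ν

/-- The `p`-th power transport cost of a coupling. -/
def pCost (p : ℝ) (π : Measure (E × E)) : ℝ := ∫ q, ‖q.2 - q.1‖ ^ p ∂π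

/-- `W_p(μ,ν)^p`. -/
def WpPow (p : ℝ) (μ ν : Measure E) : ℝ :=
  sInf {c | ∃ π : Measure (E × E), IsProbabilityMeasure π ∧ IsCoupling π μ ν ∧ c = pCost p π}

/-- The Wasserstein distance `W_p(μ,ν)`. -/
def Wp (p : ℝ) (μ ν : Measure E) : ℝ := WpPow p μ ν ^ (1 / p)

/-- `M_p(μ,ν)^p` : the martingale transport cost. -/
def MpPow (p : ℝ) (μ ν : Measure E) : ℝ :=
  sInf {c | ∃ π : Measure (E × E), IsMartingaleCoupling π μ ν ∧ c = pCost p π}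

/-- `M_p(μ,ν)`. -/
def Mp (p : ℝ) (μ ν : Measure E) : ℝ := MpPow p μ ν ^ (1 / p)

/-- A Borel nearest-neighbour projection onto the finite set `Γ`. -/
def IsNearestProj (Γ : Finset E) (f : E → E) : Prop :=
  Measurable f ∧ ∀ x, f x ∈ Γ ∧ ‖x - f x‖ = Metric.infDist x (Γ : Set E)

/-- `e_p(Γ,μ)^p`, the `p`-th power quantization error on the grid `Γ`. -/
def quantErrPow (p : ℝ) (Γ : Finset E) (μ : Measure E) : ℝ :=
  ∫ x, Metric.infDist x (Γ : Set E) ^ p ∂μ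

/-- `Γ` is an `L^p`-optimal `N`-quantizer of `μ`. -/
def IsOptimalQuantizer (p : ℝ) (N : ℕ) (Γ : Finset E) (μ : Measure E) : Prop :=
  Γ.Nonempty ∧ Γ.card ≤ N ∧
    ∀ Γ' : Finset E, Γ'.Nonempty → Γ'.card ≤ N → quantErrPow p Γ μ ≤ quantErrPow p Γ' μ

/-- `ν` is supported on at most `N` points. -/
def SuppLE (N : ℕ) (ν : Measure E) : Prop :=
  ∃ s : Finset E, s.card ≤ N ∧ ν ((s : Set E)ᶜ) = 0

section Fibers

variable {α β G : Type*} [MeasurableSpace α] [MeasurableSpace β] [MeasurableSingletonClass β]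
  [NormedAddCommGroup G] [NormedSpace ℝ G] {μ : Measure α} {f : α → β} {s : Finset β}

theorem setIntegral_preimage_eq_sum_fiber (hf : Measurable f) (hfs : ∀ x, f x ∈ s)
    {h : α → G} (hh : Integrable h μ) (A : Set β) [DecidablePred (· ∈ A)] :
    ∫ x in f ⁻¹' A, h x ∂μ = ∑ c ∈ s with c ∈ A, ∫ x in f ⁻¹' {c}, h x ∂μ := by
  have hA : f ⁻¹' A = ⋃ c ∈ s.filter (· ∈ A), f ⁻¹' {c} := by
    ext x
    simpa using fun hx => hfs x
  rw [hA, integral_biUnion_finset _ (fun c _ => hf (measurableSet_singleton c))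
    (fun c _ c' _ hcc' => (disjoint_singleton.2 hcc').preimage f) fun c _ => hh.integrableOn]

theorem integral_eq_sum_fiber (hf : Measurable f) (hfs : ∀ x, f x ∈ s)
    {h : α → G} (hh : Integrable h μ) :
    ∫ x, h x ∂μ = ∑ c ∈ s, ∫ x in f ⁻¹' {c}, h x ∂μ := by
  classical
  simpa using setIntegral_preimage_eq_sum_fiber hf hfs hh univ

end Fibers

theorem memLp_of_forall_mem_finset {α F : Type*} [MeasurableSpace α] {μ : Measure α}
    [IsFiniteMeasure μ] [NormedAddCommGroup F] {p : ENNReal} {g : α → F}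
    (hg : AEStronglyMeasurable g μ) {s : Finset F} (hgs : ∀ x, g x ∈ s) : MemLp g p μ :=
  .of_bound hg (∑ c ∈ s, ‖c‖) <|
    .of_forall fun x => s.single_le_sum (fun c _ => norm_nonneg c) (hgs x)

section Quantization

variable {F : Type*} [NormedAddCommGroup F] [MeasurableSpace F] {μ : Measure F}

theorem IsNearestProj.quantErrPow_two_eq {Γ : Finset F} {f : F → F} (hf : IsNearestProj Γ f) :
    quantErrPow 2 Γ μ = ∫ x, ‖x - f x‖ ^ 2 ∂μ := by
  simp only [quantErrPow, Real.rpow_two, (hf.2 _).2]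

theorem quantErrPow_two_le_integral {Γ : Finset F} {g : F → F} (hgΓ : ∀ x, g x ∈ Γ)
    (hg : Integrable (fun x => ‖x - g x‖ ^ 2) μ) :
    quantErrPow 2 Γ μ ≤ ∫ x, ‖x - g x‖ ^ 2 ∂μ := by
  refine integral_mono_of_nonneg (.of_forall fun x => Real.rpow_nonneg Metric.infDist_nonneg _) hg
    (.of_forall fun x => ?_)
  dsimp only
  rw [Real.rpow_two, ← dist_eq_norm]
  exact pow_le_pow_left₀ Metric.infDist_nonneg (Metric.infDist_le_dist_of_mem (hgΓ x)) 2

variable [OpensMeasurableSpace F] [SecondCountableTopology F]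

theorem integrable_norm_sub_sq [IsFiniteMeasure μ] (hX : MemLp id 2 μ) {g : F → F}
    (hg : Measurable g) {s : Finset F} (hgs : ∀ x, g x ∈ s) :
    Integrable (fun x => ‖x - g x‖ ^ 2) μ :=
  (hX.sub (memLp_of_forall_mem_finset hg.aestronglyMeasurable hgs)).integrable_norm_pow
    two_ne_zero

theorem IsOptimalQuantizer.setIntegral_norm_sub_sq_le [IsFiniteMeasure μ] (hX : MemLp id 2 μ)
    {N : ℕ} {Γ : Finset F} (hΓ : IsOptimalQuantizer 2 N Γ μ) {f : F → F}
    (hf : IsNearestProj Γ f) {a : F} (ha : a ∈ Γ) (b : F) :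
    ∫ x in f ⁻¹' {a}, ‖x - a‖ ^ 2 ∂μ ≤ ∫ x in f ⁻¹' {a}, ‖x - b‖ ^ 2 ∂μ := by
  classical
  set C := f ⁻¹' {a}
  have hC : MeasurableSet C := hf.1 (measurableSet_singleton a)
  set g : F → F → F := fun c => C.piecewise (fun _ => c) f
  have hg_mem : ∀ x, g b x ∈ insert b (Γ.erase a) := by
    intro x
    by_cases hx : x ∈ C
    · simp [g, hx]
    · simp only [g, piecewise_eq_of_notMem _ _ _ hx]
      exact Finset.mem_insert_of_mem (Finset.mem_erase.2 ⟨hx, (hf.2 x).1⟩)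
  have hg_eq : g a = f := by
    funext x
    by_cases hx : x ∈ C
    · simpa [g, hx] using hx.symm
    · simp [g, hx]
  have hg_int : ∀ c, Integrable (fun x => ‖x - g c x‖ ^ 2) μ := fun c =>
    integrable_norm_sub_sq hX (measurable_const.piecewise hC hf.1) (s := insert c Γ) fun x => by
      by_cases hx : x ∈ C <;> simp [g, hx, (hf.2 x).1]
  have hsplit : ∀ c, ∫ x, ‖x - g c x‖ ^ 2 ∂μ
      = ∫ x in C, ‖x - c‖ ^ 2 ∂μ + ∫ x in Cᶜ, ‖x - f x‖ ^ 2 ∂μ := by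
    intro c
    rw [← integral_add_compl hC (hg_int c)]
    congr 1
    · exact setIntegral_congr_fun hC fun x hx => by simp [g, hx]
    · exact setIntegral_congr_fun hC.compl fun x hx => by simp [g, piecewise_eq_of_notMem _ _ _ hx]
  have hcard : (insert b (Γ.erase a)).card ≤ N :=
    (Finset.card_insert_le _ _).trans ((Finset.card_erase_add_one ha).trans_le hΓ.2.1)
  have hopt := hΓ.2.2 _ (Finset.insert_nonempty _ _) hcard
  rw [hf.quantErrPow_two_eq, ← hg_eq] at hopt
  have hle := hopt.trans (quantErrPow_two_le_integral hg_mem (hg_int b))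
  rw [hsplit, hsplit] at hle
  linarith

end Quantization

section Centroid

variable {H : Type*} [NormedAddCommGroup H] [InnerProductSpace ℝ H] [CompleteSpace H]
  [MeasurableSpace H] [OpensMeasurableSpace H] [SecondCountableTopology H]

theorem integral_norm_sub_add_sq {ν : Measure H} [IsFiniteMeasure ν] (hX : MemLp id 2 ν)
    (a v : H) :
    ∫ x, ‖x - (a + v)‖ ^ 2 ∂ν
      = ∫ x, ‖x - a‖ ^ 2 ∂ν - 2 * inner ℝ v (∫ x, (x - a) ∂ν) + ν.real univ * ‖v‖ ^ 2 := by
  have hsub : Integrable (fun x => x - a) ν := (hX.integrable one_le_two).sub (integrable_const a)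
  have hsq : Integrable (fun x => ‖x - a‖ ^ 2) ν :=
    integrable_norm_sub_sq hX measurable_const (s := {a}) fun _ => Finset.mem_singleton_self a
  have hpt : ∀ x, ‖x - (a + v)‖ ^ 2 = ‖x - a‖ ^ 2 - 2 * inner ℝ v (x - a) + ‖v‖ ^ 2 := fun x => by
    rw [← sub_sub, norm_sub_sq_real, real_inner_comm]
  have hinner : Integrable (fun x => 2 * inner ℝ v (x - a)) ν := (hsub.const_inner v).const_mul 2
  have hdiff : Integrable (fun x => ‖x - a‖ ^ 2 - 2 * inner ℝ v (x - a)) ν := hsq.sub hinner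
  simp_rw [hpt]
  rw [integral_add hdiff (integrable_const _), integral_sub hsq hinner, integral_const_mul,
    integral_inner hsub, integral_const, smul_eq_mul]

theorem IsOptimalQuantizer.setIntegral_sub_eq_zero {μ : Measure H} [IsFiniteMeasure μ]
    (hX : MemLp id 2 μ) {N : ℕ} {Γ : Finset H} (hΓ : IsOptimalQuantizer 2 N Γ μ) {f : H → H}
    (hf : IsNearestProj Γ f) {a : H} (ha : a ∈ Γ) :
    ∫ x in f ⁻¹' {a}, (x - a) ∂μ = 0 := by
  set S := ∫ x in f ⁻¹' {a}, (x - a) ∂μ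
  set m := μ.real (f ⁻¹' {a}) with hm_def
  -- any `t > 0` with `t * m ≤ 1` makes the first-order gain `2t‖S‖²` dominate
  set t := (m + 1)⁻¹
  have ht : 0 < t := by positivity
  have htm : t * m ≤ 1 := by
    rw [inv_mul_le_iff₀ (by positivity)]
    linarith
  have hle := hΓ.setIntegral_norm_sub_sq_le hX hf ha (a + t • S)
  rw [integral_norm_sub_add_sq (hX.restrict _), measureReal_restrict_apply_univ, ← hm_def,
    inner_smul_left, conj_trivial, real_inner_self_eq_norm_sq, norm_smul,
    Real.norm_of_nonneg ht.le] at hle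
  have hS : ‖S‖ ^ 2 ≤ 0 := by
    have hsecond : t * m * (t * ‖S‖ ^ 2) ≤ t * ‖S‖ ^ 2 := mul_le_of_le_one_left (by positivity) htm
    nlinarith
  exact norm_eq_zero.1 (pow_eq_zero_iff two_ne_zero |>.1 (le_antisymm hS (sq_nonneg _)))

end Centroid

theorem ConvexOn.measureReal_univ_mul_le_integral {α V : Type*} [MeasurableSpace α]
    [NormedAddCommGroup V] [NormedSpace ℝ V] [CompleteSpace V] {ν : Measure α}
    [IsFiniteMeasure ν] {φ : V → ℝ} (hφ : ConvexOn ℝ univ φ) (hφc : Continuous φ) {X : α → V}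
    (hX : Integrable X ν) (hφX : Integrable (φ ∘ X) ν) {a : V} (hXa : ∫ x, (X x - a) ∂ν = 0) :
    ν.real univ * φ a ≤ ∫ x, φ (X x) ∂ν := by
  rcases eq_zero_or_neZero ν with rfl | hν
  · simp
  have hmean : ∫ x, X x ∂ν = ν.real univ • a := by
    rwa [integral_sub hX (integrable_const a), integral_const, sub_eq_zero] at hXa
  have havg : ⨍ x, X x ∂ν = a := by
    rw [average_eq, hmean, smul_smul, inv_mul_cancel₀ measureReal_univ_ne_zero, one_smul]
  have hjensen := hφ.map_average_le hφc.continuousOn isClosed_univ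
    (.of_forall fun _ => mem_univ _) hX hφX
  rwa [havg, average_eq, smul_eq_mul, le_inv_mul_iff₀ measureReal_univ_pos] at hjensen

section MartingaleProjection

variable {μ : Measure E} {Γ : Finset E} {f : E → E}

theorem setIntegral_preimage_sub_eq_zero [SecondCountableTopology E]
    [IsFiniteMeasure μ] (hX : Integrable id μ) (hf : Measurable f) (hfΓ : ∀ x, f x ∈ Γ)
    (hcen : ∀ c ∈ Γ, ∫ x in f ⁻¹' {c}, (x - c) ∂μ = 0) (A : Set E) :
    ∫ x in f ⁻¹' A, (x - f x) ∂μ = 0 := by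
  classical
  have hfi : Integrable f μ :=
    memLp_one_iff_integrable.1 (memLp_of_forall_mem_finset hf.aestronglyMeasurable hfΓ)
  rw [setIntegral_preimage_eq_sum_fiber hf hfΓ (h := fun x => x - f x) (hX.sub hfi)]
  refine Finset.sum_eq_zero fun c hc => ?_
  rw [← hcen c (Finset.mem_filter.1 hc).1]
  exact setIntegral_congr_fun (hf (measurableSet_singleton c)) fun x hx => by rw [hx]

theorem isMartingaleCoupling_map_of_setIntegral_fiber
    [SecondCountableTopology E] [IsProbabilityMeasure μ] (hX : Integrable id μ)
    (hf : Measurable f) (hfΓ : ∀ x, f x ∈ Γ)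
    (hcen : ∀ c ∈ Γ, ∫ x in f ⁻¹' {c}, (x - c) ∂μ = 0) :
    IsMartingaleCoupling (μ.map (fun x => (f x, x))) (μ.map f) μ := by
  have hg : Measurable fun x => (f x, x) := hf.prodMk measurable_id
  refine ⟨Measure.isProbabilityMeasure_map hg.aemeasurable, ⟨?_, ?_⟩, fun A hA => ?_⟩
  · rw [Measure.map_map measurable_fst hg]
    rfl
  · rw [Measure.map_map measurable_snd hg]
    exact Measure.map_id
  · have hsub : Measurable fun q : E × E => q.2 - q.1 := measurable_snd.sub measurable_fst
    rw [setIntegral_map (hA.prod .univ) hsub.aestronglyMeasurable hg.aemeasurable,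
      mk_preimage_prod, preimage_univ, inter_univ]
    exact setIntegral_preimage_sub_eq_zero hX hf hfΓ hcen A

theorem convexOrder_map_of_setIntegral_fiber [FiniteDimensional ℝ E] [IsFiniteMeasure μ]
    (hX : Integrable id μ) (hf : Measurable f) (hfΓ : ∀ x, f x ∈ Γ)
    (hcen : ∀ c ∈ Γ, ∫ x in f ⁻¹' {c}, (x - c) ∂μ = 0) :
    ConvexOrder (μ.map f) μ := by
  intro φ hφ hφf hφμ
  have hφfμ : Integrable (fun x => φ (f x)) μ :=
    (integrable_map_measure hφf.1 hf.aemeasurable).1 hφf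
  rw [integral_map hf.aemeasurable hφf.1, integral_eq_sum_fiber hf hfΓ hφfμ,
    integral_eq_sum_fiber hf hfΓ hφμ]
  refine Finset.sum_le_sum fun c hc => ?_
  have hC := hf (measurableSet_singleton c)
  rw [setIntegral_congr_fun hC fun x (hx : f x = c) => by rw [hx], setIntegral_const,
    smul_eq_mul, ← measureReal_restrict_apply_univ]
  exact hφ.measureReal_univ_mul_le_integral (continuousOn_univ.1 (hφ.continuousOn isOpen_univ))
    hX.restrict hφμ.restrict (hcen c hc)

end MartingaleProjection

theorem stmt2 (d N : ℕ) (μ : Measure (Ed d)) [IsProbabilityMeasure μ]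
    (hμ2 : Integrable (fun x => ‖x‖ ^ (2 : ℝ)) μ)
    (Γ : Finset (Ed d)) (hΓ : IsOptimalQuantizer 2 N Γ μ)
    (f : Ed d → Ed d) (hf : IsNearestProj Γ f) :
    IsMartingaleCoupling (μ.map (fun x => (f x, x))) (μ.map f) μ ∧
      ConvexOrder (μ.map f) μ := by
  have hX : MemLp id 2 μ := (memLp_two_iff_integrable_sq_norm aestronglyMeasurable_id).2 <| by
    simpa only [Real.rpow_two, id] using hμ2
  have hcen : ∀ c ∈ Γ, ∫ x in f ⁻¹' {c}, (x - c) ∂μ = 0 := fun c hc =>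
    hΓ.setIntegral_sub_eq_zero hX hf hc
  have hfΓ : ∀ x, f x ∈ Γ := fun x => (hf.2 x).1
  exact ⟨isMartingaleCoupling_map_of_setIntegral_fiber (hX.integrable one_le_two) hf.1 hfΓ hcen,
    convexOrder_map_of_setIntegral_fiber (hX.integrable one_le_two) hf.1 hfΓ hcen⟩
end
end

section
/- Let Γ be a quadratic optimal N-quantizer of μ ∈ P₂(ℝ^d) with associated quantization μ̂ = μ ∘ Proj_Γ^{-1}. Then for every probability measure ν with μ̂ ≤_cvx ν ≤_cvx μ, Γ is also a quadratic optimal N-quantizer of ν, and the quantization of ν on Γ coincides with μ̂. -/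
open MeasureTheory Set

noncomputable section

variable {E : Type*} [NormedAddCommGroup E] [NormedSpace ℝ E] [MeasurableSpace E] [BorelSpace E]

/-! For a finite grid `Γ`, `ψ_Γ(x) = ‖x‖² - d(x, Γ)²` is the maximum of the affine functions
`ψ_{a}(x) = 2⟪a, x⟫ - ‖a‖²`, `a ∈ Γ`; it is convex and the quantization error is
`∫ ‖x‖² dη - ∫ ψ_Γ dη`. An optimal grid is stationary, `∫_{cell a} (x - a) dμ = 0`, whence
`∫ ψ_Γ dμ = ∫ ψ_Γ dμ̂`, and the convex order squeezes `∫ ψ_Γ dν` to this common value. Since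
`∫ ψ_Γ' dν ≤ ∫ ψ_Γ' dμ` for every competitor `Γ'`, `Γ` is optimal for `ν`. Testing `ν ≤_cvx μ`
against `max(ψ_Γ, ψ_{a} + t)`, `t ↓ 0`, bounds the `ν`-mass of the cell of `a` by the `μ`-mass of
its closed cell. Stationarity of the projections that reassign ties shows that ties are
`μ`-null, so each cell has no more `ν`-mass than `μ`-mass; both sum to one, hence `ν̂ = μ̂`. -/

open scoped InnerProductSpace

section Potential

variable {F : Type*} [NormedAddCommGroup F]

def quantPotential (Γ : Finset F) (x : F) : ℝ := ‖x‖ ^ 2 - Metric.infDist x Γ ^ 2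

def closedVoronoiCell (Γ : Finset F) (a : F) : Set F := {x | ‖x - a‖ ≤ Metric.infDist x Γ}

lemma continuous_quantPotential (Γ : Finset F) : Continuous (quantPotential Γ) := by
  unfold quantPotential
  fun_prop

lemma quantPotential_sub_quantPotential_singleton (Γ : Finset F) (a x : F) :
    quantPotential Γ x - quantPotential {a} x = ‖x - a‖ ^ 2 - Metric.infDist x Γ ^ 2 := by
  simp only [quantPotential, Finset.coe_singleton, Metric.infDist_singleton, dist_eq_norm]
  ring

lemma quantPotential_singleton_le {Γ : Finset F} {a : F} (ha : a ∈ Γ) (x : F) :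
    quantPotential {a} x ≤ quantPotential Γ x := by
  have h : Metric.infDist x Γ ≤ Metric.infDist x ({a} : Finset F) :=
    Metric.infDist_le_infDist_of_subset (by simpa using ha) (by simp)
  unfold quantPotential
  gcongr
  exact Metric.infDist_nonneg

lemma quantPotential_eq_singleton_of_norm_sub_eq {Γ : Finset F} {a x : F}
    (h : ‖x - a‖ = Metric.infDist x Γ) : quantPotential Γ x = quantPotential {a} x := by
  rw [← sub_eq_zero, quantPotential_sub_quantPotential_singleton, h, sub_self]

lemma exists_mem_norm_sub_eq_infDist {Γ : Finset F} (hΓ : Γ.Nonempty) (x : F) :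
    ∃ a ∈ Γ, ‖x - a‖ = Metric.infDist x Γ := by
  obtain ⟨a, ha, h⟩ := Γ.finite_toSet.isCompact.exists_infDist_eq_dist (by simpa using hΓ) x
  exact ⟨a, ha, by rw [h, dist_eq_norm]⟩

lemma quantPotential_eq_sup' {Γ : Finset F} (hΓ : Γ.Nonempty) :
    quantPotential Γ = Γ.sup' hΓ fun a => quantPotential {a} := by
  ext x
  obtain ⟨a, ha, hx⟩ := exists_mem_norm_sub_eq_infDist hΓ x
  rw [Finset.sup'_apply]
  refine le_antisymm ?_ (Finset.sup'_le _ _ fun b hb => quantPotential_singleton_le hb x)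
  rw [quantPotential_eq_singleton_of_norm_sub_eq hx]
  exact Finset.le_sup' (fun b => quantPotential {b} x) ha

lemma mem_closedVoronoiCell_iff {Γ : Finset F} {a x : F} (ha : a ∈ Γ) :
    x ∈ closedVoronoiCell Γ a ↔ ‖x - a‖ = Metric.infDist x Γ :=
  ⟨fun hx => le_antisymm hx ((Metric.infDist_le_dist_of_mem (Finset.mem_coe.2 ha)).trans_eq
    (dist_eq_norm x a)), le_of_eq⟩

lemma closedVoronoiCell_eq_setOf (Γ : Finset F) (a : F) :
    closedVoronoiCell Γ a = {x | quantPotential Γ x - quantPotential {a} x ≤ 0} := by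
  ext x
  rw [mem_ofPred_eq, quantPotential_sub_quantPotential_singleton, sub_nonpos,
    sq_le_sq₀ (norm_nonneg _) Metric.infDist_nonneg]
  rfl

lemma max_quantPotential_le_add_indicator {Γ : Finset F} {a : F} (ha : a ∈ Γ) {t : ℝ}
    (ht : 0 ≤ t) (x : F) :
    max (quantPotential Γ x) (quantPotential {a} x + t) ≤
      quantPotential Γ x +
        {y | quantPotential Γ y - quantPotential {a} y < t}.indicator (fun _ => t) x := by
  by_cases hx : quantPotential Γ x - quantPotential {a} x < t
  · simp only [indicator_apply, mem_ofPred_eq, hx, if_true]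
    exact max_le (le_add_of_nonneg_right ht) (add_le_add_left (quantPotential_singleton_le ha x) t)
  · simp only [indicator_apply, mem_ofPred_eq, hx, if_false, add_zero]
    exact max_le le_rfl (by linarith [not_lt.1 hx])

variable [InnerProductSpace ℝ F]

lemma quantPotential_singleton (a x : F) : quantPotential {a} x = 2 * ⟪a, x⟫_ℝ - ‖a‖ ^ 2 := by
  rw [quantPotential, Finset.coe_singleton, Metric.infDist_singleton, dist_eq_norm,
    norm_sub_sq_real, real_inner_comm]
  ring

lemma convexOn_quantPotential_singleton (a : F) : ConvexOn ℝ univ (quantPotential {a}) := by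
  refine ⟨convex_univ, fun x _ y _ s t _ _ hst => le_of_eq ?_⟩
  simp only [quantPotential_singleton, inner_add_right, inner_smul_right, smul_eq_mul]
  linear_combination ‖a‖ ^ 2 * hst

lemma convexOn_quantPotential {Γ : Finset F} (hΓ : Γ.Nonempty) :
    ConvexOn ℝ univ (quantPotential Γ) := by
  rw [quantPotential_eq_sup' hΓ]
  exact Finset.sup'_induction hΓ _ (fun _ h₁ _ h₂ => h₁.sup h₂)
    fun a _ => convexOn_quantPotential_singleton a

lemma eq_zero_of_forall_two_inner_le {m : F} {c : ℝ}
    (h : ∀ v, 2 * ⟪m, v⟫_ℝ ≤ c * ‖v‖ ^ 2) : m = 0 := by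
  set t : ℝ := 1 / (|c| + 1)
  have ht : 0 < t := by positivity
  have hct : c * t < 1 := by
    calc c * t ≤ |c| * t := by gcongr; exact le_abs_self c
      _ < 1 := by rw [mul_one_div, div_lt_one (by positivity)]; linarith
  have hm := h (t • m)
  rw [real_inner_smul_right, real_inner_self_eq_norm_sq, norm_smul, Real.norm_of_nonneg ht.le,
    mul_pow] at hm
  have : ‖m‖ ^ 2 ≤ 0 := by
    by_contra! hpos
    nlinarith [mul_lt_mul_of_pos_right hct (mul_pos ht hpos)]
  simpa using this

end Potential

lemma le_measure_setOf_le_zero {α : Type*} [MeasurableSpace α] {μ : Measure α}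
    [IsFiniteMeasure μ] {g : α → ℝ} (hg : Measurable g) {m : ENNReal}
    (h : ∀ t, 0 < t → m ≤ μ {x | g x < t}) : m ≤ μ {x | g x ≤ 0} := by
  have hset : {x | g x ≤ 0} = ⋂ n : ℕ, {x | g x < 1 / (n + 1)} := by
    ext x
    simp only [mem_ofPred_eq, mem_iInter]
    refine ⟨fun hx n => hx.trans_lt (by positivity), fun hx => ?_⟩
    by_contra! hpos
    obtain ⟨n, hn⟩ := exists_nat_one_div_lt hpos
    exact (hx n).not_gt hn
  have hanti : Antitone fun n : ℕ => {x | g x < 1 / (n + 1)} := fun n k hnk x (hx : g x < _) =>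
    show g x < _ from hx.trans_le (Nat.one_div_le_one_div hnk)
  rw [hset, hanti.measure_iInter (fun n => (measurableSet_lt hg measurable_const).nullMeasurableSet)
    ⟨0, measure_ne_top _ _⟩]
  exact le_iInf fun n => h _ (by positivity)

section Cells

variable {F : Type*} [NormedAddCommGroup F] [MeasurableSpace F]

lemma quantErrPow_two (Γ : Finset F) (μ : Measure F) :
    quantErrPow 2 Γ μ = ∫ x, Metric.infDist x Γ ^ 2 ∂μ := by
  simp [quantErrPow]

namespace IsNearestProj

variable {Γ : Finset F} {f : F → F} {μ : Measure F}

lemma preimage_eq_univ (hf : IsNearestProj Γ f) : f ⁻¹' Γ = univ :=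
  eq_univ_of_forall fun x => (hf.2 x).1

lemma biUnion_preimage_eq_univ (hf : IsNearestProj Γ f) : ⋃ a ∈ Γ, f ⁻¹' {a} = univ := by
  rw [← hf.preimage_eq_univ, ← Set.biUnion_preimage_singleton]
  rfl

lemma preimage_subset_closedVoronoiCell (hf : IsNearestProj Γ f) (a : F) :
    f ⁻¹' {a} ⊆ closedVoronoiCell Γ a :=
  fun x (hx : f x = a) => (hx ▸ (hf.2 x).2).le

lemma piecewise (hf : IsNearestProj Γ f) {a : F} (ha : a ∈ Γ) {S : Set F}
    [DecidablePred (· ∈ S)] (hS : MeasurableSet S) (hSa : S ⊆ closedVoronoiCell Γ a) :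
    IsNearestProj Γ (S.piecewise (fun _ => a) f) := by
  refine ⟨measurable_const.piecewise hS hf.1, fun x => ?_⟩
  by_cases hx : x ∈ S
  · rw [piecewise_eq_of_mem _ _ _ hx]
    exact ⟨ha, (mem_closedVoronoiCell_iff ha).1 (hSa hx)⟩
  · rw [piecewise_eq_of_notMem _ _ _ hx]
    exact hf.2 x

lemma quantPotential_add_indicator_le_max (hf : IsNearestProj Γ f) (a : F) (t : ℝ) (x : F) :
    quantPotential Γ x + (f ⁻¹' {a}).indicator (fun _ => t) x ≤
      max (quantPotential Γ x) (quantPotential {a} x + t) := by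
  by_cases hx : f x = a
  · rw [indicator_of_mem (show x ∈ f ⁻¹' {a} from hx),
      quantPotential_eq_singleton_of_norm_sub_eq (hx ▸ (hf.2 x).2)]
    exact le_max_right _ _
  · rw [indicator_of_notMem (show x ∉ f ⁻¹' {a} from hx), add_zero]
    exact le_max_left _ _

lemma integrable_comp [IsFiniteMeasure μ] (hf : IsNearestProj Γ f) {g : F → ℝ}
    (hg : Measurable g) : Integrable (fun x => g (f x)) μ :=
  Integrable.of_bound (hg.comp hf.1).aestronglyMeasurable (∑ a ∈ Γ, ‖g a‖) (ae_of_all _ fun x =>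
    Finset.single_le_sum (f := fun a => ‖g a‖) (fun _ _ => norm_nonneg _) (hf.2 x).1)

variable [BorelSpace F]

lemma measurableSet_preimage (hf : IsNearestProj Γ f) (a : F) : MeasurableSet (f ⁻¹' {a}) :=
  hf.1 (measurableSet_singleton a)

lemma sum_measureReal_preimage (hf : IsNearestProj Γ f) (μ : Measure F)
    [IsProbabilityMeasure μ] : ∑ a ∈ Γ, μ.real (f ⁻¹' {a}) = 1 := by
  rw [sum_measureReal_preimage_singleton Γ fun a _ => hf.measurableSet_preimage a,
    hf.preimage_eq_univ, probReal_univ]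

lemma measure_eq_sum_inter_preimage (hf : IsNearestProj Γ f) (μ : Measure F) (s : Set F) :
    μ s = ∑ a ∈ Γ, μ (s ∩ f ⁻¹' {a}) := by
  have h := sum_measure_preimage_singleton (μ := μ.restrict s) Γ
    fun a _ => hf.measurableSet_preimage a
  simp only [Measure.restrict_apply (hf.measurableSet_preimage _), hf.preimage_eq_univ,
    Measure.restrict_apply_univ] at h
  simp_rw [inter_comm s]
  exact h.symm

lemma map_eq_sum_dirac (hf : IsNearestProj Γ f) (μ : Measure F) :
    μ.map f = ∑ a ∈ Γ, μ (f ⁻¹' {a}) • Measure.dirac a := by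
  ext s hs
  rw [Measure.map_apply hf.1 hs, hf.measure_eq_sum_inter_preimage μ, Measure.finsetSum_apply]
  refine Finset.sum_congr rfl fun a _ => ?_
  rw [Measure.smul_apply, Measure.dirac_apply' a hs, smul_eq_mul]
  by_cases ha : a ∈ s
  · rw [indicator_of_mem ha, Pi.one_apply, mul_one, ← preimage_inter,
      inter_eq_right.2 (singleton_subset_iff.2 ha)]
  · rw [indicator_of_notMem ha, mul_zero, ← preimage_inter, inter_singleton_eq_empty.2 ha,
      preimage_empty, measure_empty]

lemma map_eq_map_of_measure_preimage_le (hf : IsNearestProj Γ f) {ν : Measure F}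
    [IsProbabilityMeasure μ] [IsProbabilityMeasure ν]
    (h : ∀ a ∈ Γ, ν (f ⁻¹' {a}) ≤ μ (f ⁻¹' {a})) : ν.map f = μ.map f := by
  have hreal : ∀ a ∈ Γ, ν.real (f ⁻¹' {a}) ≤ μ.real (f ⁻¹' {a}) :=
    fun a ha => ENNReal.toReal_mono (measure_ne_top _ _) (h a ha)
  have heq := (Finset.sum_eq_sum_iff_of_le hreal).1
    (by rw [hf.sum_measureReal_preimage, hf.sum_measureReal_preimage])
  rw [hf.map_eq_sum_dirac, hf.map_eq_sum_dirac]
  exact Finset.sum_congr rfl fun a ha => by rw [(measureReal_eq_measureReal_iff).1 (heq a ha)]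

lemma integral_eq_sum_setIntegral {G : Type*} [NormedAddCommGroup G] [NormedSpace ℝ G]
    (hf : IsNearestProj Γ f) {g : F → G} (hg : ∀ a ∈ Γ, IntegrableOn g (f ⁻¹' {a}) μ) :
    ∫ x, g x ∂μ = ∑ a ∈ Γ, ∫ x in f ⁻¹' {a}, g x ∂μ := by
  rw [← integral_biUnion_finset Γ (fun a _ => hf.measurableSet_preimage a)
    (Set.pairwiseDisjoint_fiber f Γ) hg, hf.biUnion_preimage_eq_univ, Measure.restrict_univ]

end IsNearestProj

variable [BorelSpace F] {μ : Measure F} [IsFiniteMeasure μ]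

lemma integrable_infDist_sq (hμ : Integrable (fun x => ‖x‖ ^ 2) μ) {Γ : Finset F}
    (hΓ : Γ.Nonempty) : Integrable (fun x => Metric.infDist x Γ ^ 2) μ := by
  obtain ⟨a, ha⟩ := hΓ
  refine ((hμ.const_mul 2).add (integrable_const (2 * ‖a‖ ^ 2))).mono'
    (by fun_prop) (ae_of_all _ fun x => ?_)
  have hle : Metric.infDist x Γ ≤ ‖x‖ + ‖a‖ :=
    (Metric.infDist_le_dist_of_mem (Finset.mem_coe.2 ha)).trans
      ((dist_eq_norm x a).trans_le (norm_sub_le x a))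
  rw [Real.norm_eq_abs, abs_of_nonneg (by positivity)]
  change _ ≤ 2 * ‖x‖ ^ 2 + 2 * ‖a‖ ^ 2
  nlinarith [Metric.infDist_nonneg (x := x) (s := (Γ : Set F)), sq_nonneg (‖x‖ - ‖a‖)]

lemma integrable_quantPotential (hμ : Integrable (fun x => ‖x‖ ^ 2) μ) {Γ : Finset F}
    (hΓ : Γ.Nonempty) : Integrable (quantPotential Γ) μ :=
  hμ.sub (integrable_infDist_sq hμ hΓ)

lemma quantErrPow_two_eq_sub (hμ : Integrable (fun x => ‖x‖ ^ 2) μ) {Γ : Finset F}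
    (hΓ : Γ.Nonempty) :
    quantErrPow 2 Γ μ = ∫ x, ‖x‖ ^ 2 ∂μ - ∫ x, quantPotential Γ x ∂μ := by
  rw [quantErrPow_two, ← integral_sub hμ (integrable_quantPotential hμ hΓ)]
  simp [quantPotential]

lemma integrable_sub_const [SecondCountableTopology F] (hμ : Integrable (fun x => ‖x‖ ^ 2) μ)
    (a : F) : Integrable (fun x => x - a) μ :=
  (((memLp_two_iff_integrable_sq_norm aestronglyMeasurable_id).2 hμ).integrable
    one_le_two).sub (integrable_const a)

end Cells

section ConvexOrder

variable {F : Type*} [NormedAddCommGroup F] [InnerProductSpace ℝ F] [MeasurableSpace F]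
  [BorelSpace F] {μ ν : Measure F} [IsFiniteMeasure μ] [IsFiniteMeasure ν] {Γ : Finset F}

lemma IsOptimalQuantizer.of_convexOrder {N : ℕ} (hμ : Integrable (fun x => ‖x‖ ^ 2) μ)
    (hν : Integrable (fun x => ‖x‖ ^ 2) ν) (hΓ : IsOptimalQuantizer 2 N Γ μ)
    (hνμ : ConvexOrder ν μ) (heq : ∫ x, quantPotential Γ x ∂ν = ∫ x, quantPotential Γ x ∂μ) :
    IsOptimalQuantizer 2 N Γ ν := by
  refine ⟨hΓ.1, hΓ.2.1, fun Γ' hΓ' hcard => ?_⟩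
  have hopt := hΓ.2.2 Γ' hΓ' hcard
  have hΓ'νμ := hνμ _ (convexOn_quantPotential hΓ') (integrable_quantPotential hν hΓ')
    (integrable_quantPotential hμ hΓ')
  rw [quantErrPow_two_eq_sub hμ hΓ.1, quantErrPow_two_eq_sub hμ hΓ'] at hopt
  rw [quantErrPow_two_eq_sub hν hΓ.1, quantErrPow_two_eq_sub hν hΓ']
  linarith

/-- `max(ψ_Γ, ψ_{a} + t)` equals `ψ_Γ + t` on the cell of `a` and exceeds `ψ_Γ` only where
`ψ_Γ - ψ_{a} < t`. -/
lemma measureReal_preimage_le_of_convexOrder (hμ : Integrable (fun x => ‖x‖ ^ 2) μ)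
    (hν : Integrable (fun x => ‖x‖ ^ 2) ν) (hΓ : Γ.Nonempty) {f : F → F}
    (hf : IsNearestProj Γ f) (hνμ : ConvexOrder ν μ)
    (heq : ∫ x, quantPotential Γ x ∂ν = ∫ x, quantPotential Γ x ∂μ) {a : F} (ha : a ∈ Γ)
    {t : ℝ} (ht : 0 < t) :
    ν.real (f ⁻¹' {a}) ≤ μ.real {x | quantPotential Γ x - quantPotential {a} x < t} := by
  set C := f ⁻¹' {a}
  set W := {x | quantPotential Γ x - quantPotential {a} x < t}
  have hC : MeasurableSet C := hf.measurableSet_preimage a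
  have hW : MeasurableSet W := measurableSet_lt
    ((continuous_quantPotential Γ).sub (continuous_quantPotential {a})).measurable measurable_const
  set φ := quantPotential Γ ⊔ fun x => quantPotential {a} x + t
  have hφ : ConvexOn ℝ univ φ :=
    (convexOn_quantPotential hΓ).sup ((convexOn_quantPotential_singleton a).add_const t)
  have hφint : ∀ η : Measure F, [IsFiniteMeasure η] → Integrable (fun x => ‖x‖ ^ 2) η →
      Integrable φ η := fun η _ hη => (integrable_quantPotential hη hΓ).sup
    ((integrable_quantPotential hη (Finset.singleton_nonempty a)).add (integrable_const t))
  have hlow := hf.quantPotential_add_indicator_le_max a t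
  have hup := max_quantPotential_le_add_indicator ha ht.le
  have hν' := integral_mono ((integrable_quantPotential hν hΓ).add
    ((integrable_const t).indicator hC)) (hφint ν hν) hlow
  have hμ' := integral_mono (hφint μ hμ) ((integrable_quantPotential hμ hΓ).add
    ((integrable_const t).indicator hW)) hup
  simp only [Pi.add_apply] at hν' hμ'
  rw [integral_add (integrable_quantPotential hν hΓ) ((integrable_const t).indicator hC),
    integral_indicator_const _ hC, smul_eq_mul] at hν'
  rw [integral_add (integrable_quantPotential hμ hΓ) ((integrable_const t).indicator hW),
    integral_indicator_const _ hW, smul_eq_mul] at hμ'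
  have := hνμ φ hφ (hφint ν hν) (hφint μ hμ)
  exact le_of_mul_le_mul_right (by linarith) ht

lemma measure_preimage_le_of_convexOrder (hμ : Integrable (fun x => ‖x‖ ^ 2) μ)
    (hν : Integrable (fun x => ‖x‖ ^ 2) ν) (hΓ : Γ.Nonempty) {f : F → F}
    (hf : IsNearestProj Γ f) (hνμ : ConvexOrder ν μ)
    (heq : ∫ x, quantPotential Γ x ∂ν = ∫ x, quantPotential Γ x ∂μ) {a : F} (ha : a ∈ Γ) :
    ν (f ⁻¹' {a}) ≤ μ (closedVoronoiCell Γ a) := by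
  rw [closedVoronoiCell_eq_setOf]
  refine le_measure_setOf_le_zero
    ((continuous_quantPotential Γ).sub (continuous_quantPotential {a})).measurable fun t ht => ?_
  exact (ENNReal.toReal_le_toReal (measure_ne_top _ _) (measure_ne_top _ _)).1
    (measureReal_preimage_le_of_convexOrder hμ hν hΓ hf hνμ heq ha ht)

end ConvexOrder

section Stationarity

variable {F : Type*} [NormedAddCommGroup F] [InnerProductSpace ℝ F] [MeasurableSpace F]

lemma IsNearestProj.infDist_insert_erase_sq_le [DecidableEq F] {Γ : Finset F} {f : F → F}
    (hf : IsNearestProj Γ f) (a h x : F) :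
    Metric.infDist x (insert (a + h) (Γ.erase a) : Finset F) ^ 2 ≤
      Metric.infDist x Γ ^ 2 + (f ⁻¹' {a}).indicator (fun y => ‖h‖ ^ 2 - 2 * ⟪y - a, h⟫_ℝ) x := by
  have hle : ∀ b ∈ insert (a + h) (Γ.erase a),
      Metric.infDist x (insert (a + h) (Γ.erase a) : Finset F) ^ 2 ≤ ‖x - b‖ ^ 2 := fun b hb => by
    gcongr
    · exact Metric.infDist_nonneg
    · exact (Metric.infDist_le_dist_of_mem (Finset.mem_coe.2 hb)).trans_eq (dist_eq_norm x b)
  by_cases hx : f x = a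
  · rw [indicator_of_mem (show x ∈ f ⁻¹' {a} from hx), ← (hf.2 x).2, hx]
    calc _ ≤ ‖x - (a + h)‖ ^ 2 := hle _ (Finset.mem_insert_self _ _)
      _ = ‖x - a‖ ^ 2 + (‖h‖ ^ 2 - 2 * ⟪x - a, h⟫_ℝ) := by
        rw [sub_add_eq_sub_sub, norm_sub_sq_real]; ring
  · rw [indicator_of_notMem (show x ∉ f ⁻¹' {a} from hx), add_zero, ← (hf.2 x).2]
    exact hle _ (Finset.mem_insert_of_mem (Finset.mem_erase.2 ⟨hx, (hf.2 x).1⟩))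

variable [BorelSpace F] [SecondCountableTopology F] [CompleteSpace F] {μ : Measure F}
  [IsFiniteMeasure μ] {N : ℕ} {Γ : Finset F} {f : F → F}

namespace IsOptimalQuantizer

/-- Stationarity. Moving `a` to `a + h` changes the error by at most
`μ(C) ‖h‖² - 2⟪∫_C (x - a), h⟫`, which optimality makes nonnegative for every `h`. -/
theorem setIntegral_sub_eq_zero_s7 (hμ : Integrable (fun x => ‖x‖ ^ 2) μ) {a : F}
    (hΓ : IsOptimalQuantizer 2 N Γ μ) (hf : IsNearestProj Γ f) (ha : a ∈ Γ) :
    ∫ x in f ⁻¹' {a}, (x - a) ∂μ = 0 := by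
  classical
  set C := f ⁻¹' {a}
  refine eq_zero_of_forall_two_inner_le (c := μ.real C) fun h => ?_
  set Γ' := insert (a + h) (Γ.erase a)
  have hcard : Γ'.card ≤ N :=
    (Finset.card_insert_le _ _).trans ((Finset.card_erase_add_one ha).trans_le hΓ.2.1)
  have hsub : IntegrableOn (fun y => y - a) C μ := (integrable_sub_const hμ a).integrableOn
  have hinner : IntegrableOn (fun y => 2 * ⟪y - a, h⟫_ℝ) C μ := (hsub.inner_const h).const_mul 2
  have hint : IntegrableOn (fun y => ‖h‖ ^ 2 - 2 * ⟪y - a, h⟫_ℝ) C μ :=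
    (integrable_const _).sub hinner
  have hcell : ∫ y in C, (‖h‖ ^ 2 - 2 * ⟪y - a, h⟫_ℝ) ∂μ =
      μ.real C * ‖h‖ ^ 2 - 2 * ⟪∫ x in C, (x - a) ∂μ, h⟫_ℝ := by
    rw [integral_sub (integrable_const _) hinner, setIntegral_const, integral_const_mul,
      smul_eq_mul, real_inner_comm, ← integral_inner hsub]
    simp_rw [real_inner_comm]
  have hC := hf.measurableSet_preimage a
  have hpert : quantErrPow 2 Γ' μ ≤
      quantErrPow 2 Γ μ + ∫ y in C, (‖h‖ ^ 2 - 2 * ⟪y - a, h⟫_ℝ) ∂μ := by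
    rw [quantErrPow_two, quantErrPow_two, ← integral_indicator hC,
      ← integral_add (integrable_infDist_sq hμ hΓ.1) (hint.integrable_indicator hC)]
    exact integral_mono (integrable_infDist_sq hμ (Finset.insert_nonempty _ _))
      ((integrable_infDist_sq hμ hΓ.1).add (hint.integrable_indicator hC))
      (hf.infDist_insert_erase_sq_le a h)
  have := hΓ.2.2 Γ' (Finset.insert_nonempty _ _) hcard
  linarith

lemma integral_inner_sub_eq_zero (hμ : Integrable (fun x => ‖x‖ ^ 2) μ)
    (hΓ : IsOptimalQuantizer 2 N Γ μ) (hf : IsNearestProj Γ f) :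
    ∫ x, ⟪f x, x - f x⟫_ℝ ∂μ = 0 := by
  have hcell : ∀ a ∈ Γ, EqOn (fun x => ⟪a, x - a⟫_ℝ) (fun x => ⟪f x, x - f x⟫_ℝ) (f ⁻¹' {a}) :=
    fun a _ x (hx : f x = a) => by simp only [hx]
  rw [hf.integral_eq_sum_setIntegral fun a ha => (((integrable_sub_const hμ a).const_inner
    a).integrableOn.congr_fun (hcell a ha) (hf.measurableSet_preimage a))]
  refine Finset.sum_eq_zero fun a ha => ?_
  rw [← setIntegral_congr_fun (hf.measurableSet_preimage a) (hcell a ha),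
    integral_inner (integrable_sub_const hμ a).integrableOn, hΓ.setIntegral_sub_eq_zero_s7 hμ hf ha,
    inner_zero_right]

lemma integral_quantPotential_map (hμ : Integrable (fun x => ‖x‖ ^ 2) μ)
    (hΓ : IsOptimalQuantizer 2 N Γ μ) (hf : IsNearestProj Γ f) :
    ∫ x, quantPotential Γ x ∂(μ.map f) = ∫ x, quantPotential Γ x ∂μ := by
  have hsq : Integrable (fun x => ‖f x‖ ^ 2) μ :=
    hf.integrable_comp (g := fun y => ‖y‖ ^ 2) (by fun_prop)
  have hdiff : ∀ x, quantPotential Γ x - ‖f x‖ ^ 2 = 2 * ⟪f x, x - f x⟫_ℝ := fun x => by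
    rw [quantPotential_eq_singleton_of_norm_sub_eq (hf.2 x).2, quantPotential_singleton,
      inner_sub_right, real_inner_self_eq_norm_sq]
    ring
  have hmap : ∀ x, quantPotential Γ (f x) = ‖f x‖ ^ 2 := fun x => by
    rw [quantPotential, Metric.infDist_zero_of_mem (Finset.mem_coe.2 (hf.2 x).1)]
    ring
  rw [integral_map hf.1.aemeasurable (continuous_quantPotential Γ).aestronglyMeasurable]
  simp_rw [hmap]
  have := integral_sub (integrable_quantPotential hμ hΓ.1) hsq
  simp_rw [hdiff, integral_const_mul, hΓ.integral_inner_sub_eq_zero hμ hf] at this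
  linarith

/-- Reassigning `S` from the cell of `b` to the cell of `a` gives another nearest-neighbour
projection, to which stationarity applies as well. -/
lemma setIntegral_sub_eq_zero_of_subset (hμ : Integrable (fun x => ‖x‖ ^ 2) μ)
    (hΓ : IsOptimalQuantizer 2 N Γ μ) (hf : IsNearestProj Γ f) {a b : F} (ha : a ∈ Γ)
    (hb : b ∈ Γ) (hab : a ≠ b) {S : Set F} (hS : MeasurableSet S) (hSb : S ⊆ f ⁻¹' {b})
    (hSa : S ⊆ closedVoronoiCell Γ a) :
    ∫ x in S, (x - a) ∂μ = 0 ∧ ∫ x in S, (x - b) ∂μ = 0 := by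
  classical
  have hf' := hf.piecewise ha hS hSa
  have hpa : S.piecewise (fun _ => a) f ⁻¹' {a} = S ∪ f ⁻¹' {a} := by
    ext x
    by_cases hx : x ∈ S <;> simp [hx]
  have hpb : S.piecewise (fun _ => a) f ⁻¹' {b} = f ⁻¹' {b} \ S := by
    ext x
    by_cases hx : x ∈ S <;> simp [hx, hab]
  have hdisj : Disjoint S (f ⁻¹' {a}) :=
    disjoint_left.2 fun x hx (hxa : f x = a) => hab (hxa.symm.trans (hSb hx))
  constructor
  · have h := hΓ.setIntegral_sub_eq_zero_s7 hμ hf' ha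
    rwa [hpa, setIntegral_union hdisj (hf.measurableSet_preimage a)
      (integrable_sub_const hμ a).integrableOn (integrable_sub_const hμ a).integrableOn,
      hΓ.setIntegral_sub_eq_zero_s7 hμ hf ha, add_zero] at h
  · have h := hΓ.setIntegral_sub_eq_zero_s7 hμ hf hb
    rwa [← sdiff_union_of_subset hSb, setIntegral_union disjoint_sdiff_left hS
      (integrable_sub_const hμ b).integrableOn (integrable_sub_const hμ b).integrableOn,
      ← hpb, hΓ.setIntegral_sub_eq_zero_s7 hμ hf' hb, zero_add] at h

lemma measure_preimage_inter_closedVoronoiCell (hμ : Integrable (fun x => ‖x‖ ^ 2) μ)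
    (hΓ : IsOptimalQuantizer 2 N Γ μ) (hf : IsNearestProj Γ f) {a b : F} (ha : a ∈ Γ)
    (hb : b ∈ Γ) (hab : a ≠ b) : μ (f ⁻¹' {b} ∩ closedVoronoiCell Γ a) = 0 := by
  set S := f ⁻¹' {b} ∩ closedVoronoiCell Γ a
  have hS : MeasurableSet S := (hf.measurableSet_preimage b).inter
    (measurableSet_le (by fun_prop) (by fun_prop))
  obtain ⟨hSa, hSb⟩ := hΓ.setIntegral_sub_eq_zero_of_subset hμ hf ha hb hab hS
    inter_subset_left inter_subset_right
  have h : ∫ x in S, ((x - a) - (x - b)) ∂μ = 0 := by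
    rw [integral_sub (integrable_sub_const hμ a).integrableOn
      (integrable_sub_const hμ b).integrableOn, hSa, hSb, sub_zero]
  simp_rw [sub_sub_sub_cancel_left] at h
  rw [setIntegral_const, smul_eq_zero, sub_eq_zero] at h
  exact (measureReal_eq_zero_iff).1 (h.resolve_right hab.symm)

lemma measure_closedVoronoiCell (hμ : Integrable (fun x => ‖x‖ ^ 2) μ)
    (hΓ : IsOptimalQuantizer 2 N Γ μ) (hf : IsNearestProj Γ f) {a : F} (ha : a ∈ Γ) :
    μ (closedVoronoiCell Γ a) = μ (f ⁻¹' {a}) := by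
  refine le_antisymm ?_ (measure_mono (hf.preimage_subset_closedVoronoiCell a))
  rw [hf.measure_eq_sum_inter_preimage μ, Finset.sum_eq_single_of_mem a ha fun b hb hba => by
    rw [inter_comm, hΓ.measure_preimage_inter_closedVoronoiCell hμ hf ha hb hba.symm]]
  exact measure_mono inter_subset_right

end IsOptimalQuantizer

lemma integral_quantPotential_eq_of_convexOrder {ν : Measure F} [IsFiniteMeasure ν]
    (hμ : Integrable (fun x => ‖x‖ ^ 2) μ) (hν : Integrable (fun x => ‖x‖ ^ 2) ν)
    (hΓ : IsOptimalQuantizer 2 N Γ μ) (hf : IsNearestProj Γ f) (hmapν : ConvexOrder (μ.map f) ν)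
    (hνμ : ConvexOrder ν μ) : ∫ x, quantPotential Γ x ∂ν = ∫ x, quantPotential Γ x ∂μ := by
  have hψ := convexOn_quantPotential hΓ.1
  have hmap : Integrable (quantPotential Γ) (μ.map f) :=
    (integrable_map_measure (continuous_quantPotential Γ).aestronglyMeasurable
      hf.1.aemeasurable).2 (hf.integrable_comp (continuous_quantPotential Γ).measurable)
  refine le_antisymm (hνμ _ hψ (integrable_quantPotential hν hΓ.1)
    (integrable_quantPotential hμ hΓ.1)) ?_
  rw [← hΓ.integral_quantPotential_map hμ hf]
  exact hmapν _ hψ hmap (integrable_quantPotential hν hΓ.1)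

end Stationarity

theorem stmt7 (d N : ℕ) (μ : Measure (Ed d)) [IsProbabilityMeasure μ]
    (hμ2 : Integrable (fun x => ‖x‖ ^ (2 : ℝ)) μ)
    (Γ : Finset (Ed d)) (hΓ : IsOptimalQuantizer 2 N Γ μ)
    (f : Ed d → Ed d) (hf : IsNearestProj Γ f)
    (ν : Measure (Ed d)) [IsProbabilityMeasure ν]
    (hν2 : Integrable (fun x => ‖x‖ ^ (2 : ℝ)) ν)
    (h1 : ConvexOrder (μ.map f) ν) (h2 : ConvexOrder ν μ) :
    IsOptimalQuantizer 2 N Γ ν ∧ ν.map f = μ.map f := by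
  simp only [Real.rpow_two] at hμ2 hν2
  have hψ := integral_quantPotential_eq_of_convexOrder hμ2 hν2 hΓ hf h1 h2
  refine ⟨hΓ.of_convexOrder hμ2 hν2 h2 hψ, hf.map_eq_map_of_measure_preimage_le fun a ha => ?_⟩
  calc ν (f ⁻¹' {a}) ≤ μ (closedVoronoiCell Γ a) :=
        measure_preimage_le_of_convexOrder hμ2 hν2 hΓ.1 hf h2 hψ ha
    _ = μ (f ⁻¹' {a}) := hΓ.measure_closedVoronoiCell hμ2 hf ha
end
end

section
/- Let μ be a compactly supported probability measure on ℝ^d and Γ a finite set whose convex hull contains the support of μ. Then there exists a probability measure ν supported on Γ with μ ≤_cvx ν; i.e., the set P_{≥μ}(Γ) is nonempty. -/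
/-! For convex integrable `φ`, the vectors `(∫ φ dμ - φ γ)_{γ ∈ Γ}` form a convex cone in `ℝ^Γ`.
By the maximum principle `∫ φ dμ ≤ max_Γ φ`, so this cone misses the open positive orthant.
Separating the two gives weights `p` in the standard simplex on `Γ` with
`∫ φ dμ ≤ ∑ γ, p γ * φ γ` for all such `φ`, and `ν = ∑ γ, p γ • δ_γ` dominates `μ` in convex
order. -/

open MeasureTheory Set

noncomputable section

variable {E : Type*} [NormedAddCommGroup E] [NormedSpace ℝ E] [MeasurableSpace E] [BorelSpace E]

theorem exists_mem_stdSimplex_sum_mul_nonpos_of_cone {ι : Type*} [Fintype ι] {S : Set (ι → ℝ)}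
    (hconv : Convex ℝ S) (hzero : (0 : ι → ℝ) ∈ S)
    (hsmul : ∀ s ∈ S, ∀ t : ℝ, 0 < t → t • s ∈ S) (hS : ∀ s ∈ S, ∃ i, s i ≤ 0) :
    ∃ p ∈ stdSimplex ℝ ι, ∀ s ∈ S, ∑ i, p i * s i ≤ 0 := by
  classical
  set O : Set (ι → ℝ) := univ.pi fun _ => Ioi 0
  have hdisj : Disjoint O S := disjoint_left.2 fun s hsO hsS => by
    obtain ⟨i, hi⟩ := hS s hsS
    exact (hsO i (mem_univ i)).not_ge hi
  obtain ⟨f, u, hfO, hfS⟩ := geometric_hahn_banach_open (convex_pi fun _ _ => convex_Ioi 0)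
    (isOpen_set_pi finite_univ fun _ _ => isOpen_Ioi) hconv hdisj
  have hu : u ≤ 0 := by simpa using hfS 0 hzero
  -- `u ≤ f (t • s) = t * f s` for every `t > 0` forces `0 ≤ f s`
  have hfS_nonneg : ∀ s ∈ S, 0 ≤ f s := by
    intro s hs
    by_contra! h
    have := hfS _ (hsmul s hs ((u - 1) / f s) (div_pos_of_neg_of_neg (by linarith) h))
    rw [map_smul, smul_eq_mul, div_mul_cancel₀ _ h.ne] at this
    linarith
  have hf_closure : ∀ v ∈ closure O, f v ≤ 0 :=
    closure_minimal (fun v hv => ((hfO v hv).trans_le hu).le)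
      (isClosed_le f.continuous continuous_const)
  set a : ι → ℝ := fun i => -f fun j => if i = j then 1 else 0
  have ha : ∀ i, 0 ≤ a i := fun i => neg_nonneg.2 <| hf_closure _ <| by
    rw [closure_pi_set, closure_Ioi]
    intro j _
    simp only [mem_Ici]
    split_ifs <;> simp
  have hf_eq : ∀ v, f v = -∑ i, a i * v i := fun v => by
    simpa [a, mul_comm] using f.toLinearMap.pi_apply_eq_sum_univ v
  have hA : 0 < ∑ i, a i := by
    have := hfO 1 fun i _ => one_pos (α := ℝ)
    simp only [hf_eq, Pi.one_apply, mul_one] at this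
    linarith
  refine ⟨fun i => a i / ∑ j, a j,
    ⟨fun i => div_nonneg (ha i) hA.le, by rw [← Finset.sum_div, div_self hA.ne']⟩,
    fun s hs => ?_⟩
  have := hfS_nonneg s hs
  rw [hf_eq] at this
  simp_rw [div_mul_eq_mul_div, ← Finset.sum_div]
  exact div_nonpos_of_nonpos_of_nonneg (by linarith) hA.le

theorem ConvexOn.exists_integral_le_of_ae_mem_convexHull {V : Type*} [AddCommGroup V]
    [Module ℝ V] [MeasurableSpace V] {μ : Measure V} [IsProbabilityMeasure μ] {Γ : Finset V}
    (hΓ : ∀ᵐ x ∂μ, x ∈ convexHull ℝ (Γ : Set V)) {φ : V → ℝ}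
    (hφ : ConvexOn ℝ (convexHull ℝ (Γ : Set V)) φ) (hint : Integrable φ μ) :
    ∃ γ ∈ Γ, ∫ x, φ x ∂μ ≤ φ γ := by
  obtain ⟨x, hx⟩ := hΓ.exists
  obtain ⟨γ, hγ, hmax⟩ := Γ.exists_max_image φ <| by
    simpa using convexHull_nonempty_iff.1 ⟨x, hx⟩
  have hle : ∀ᵐ x ∂μ, φ x ≤ φ γ := hΓ.mono fun x hx => by
    obtain ⟨z, hz, hxz⟩ := hφ.exists_ge_of_mem_convexHull (subset_convexHull ℝ _) hx
    exact hxz.trans (hmax z hz)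
  refine ⟨γ, hγ, ?_⟩
  calc ∫ x, φ x ∂μ ≤ ∫ _, φ γ ∂μ := integral_mono_ae hint (integrable_const _) hle
    _ = φ γ := by simp

section WeightedDirac

variable {ι V : Type*} [Fintype ι] [MeasurableSpace V]

def weightedDirac (p : ι → ℝ) (x : ι → V) : Measure V :=
  ∑ i, ENNReal.ofReal (p i) • Measure.dirac (x i)

variable {p : ι → ℝ} (x : ι → V)

theorem isProbabilityMeasure_weightedDirac (hp : p ∈ stdSimplex ℝ ι) :
    IsProbabilityMeasure (weightedDirac p x) := by
  constructor
  simp only [weightedDirac, Measure.coe_finsetSum, Measure.coe_smul, Finset.sum_apply,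
    Pi.smul_apply, measure_univ, smul_eq_mul, mul_one]
  rw [← ENNReal.ofReal_sum_of_nonneg fun i _ => hp.1 i, hp.2, ENNReal.ofReal_one]

theorem weightedDirac_compl_range [MeasurableSingletonClass V] :
    weightedDirac p x (range x)ᶜ = 0 := by
  simp [weightedDirac]

theorem integral_weightedDirac [MeasurableSingletonClass V] (hp : 0 ≤ p) (φ : V → ℝ) :
    ∫ y, φ y ∂weightedDirac p x = ∑ i, p i * φ (x i) := by
  rw [weightedDirac, integral_finsetSum_measure]
  · simp [ENNReal.toReal_ofReal (hp _)]
  · exact fun i _ => (integrable_dirac (by simp)).smul_measure ENNReal.ofReal_ne_top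

end WeightedDirac

theorem exists_mem_stdSimplex_integral_le_sum {V : Type*} [AddCommGroup V] [Module ℝ V]
    [MeasurableSpace V] {μ : Measure V} [IsProbabilityMeasure μ] {Γ : Finset V}
    (hΓ : ∀ᵐ x ∂μ, x ∈ convexHull ℝ (Γ : Set V)) :
    ∃ p ∈ stdSimplex ℝ Γ, ∀ φ : V → ℝ, ConvexOn ℝ univ φ → Integrable φ μ →
      ∫ x, φ x ∂μ ≤ ∑ γ, p γ * φ γ := by
  set S : Set (Γ → ℝ) := {s | ∃ φ : V → ℝ, ConvexOn ℝ univ φ ∧ Integrable φ μ ∧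
    s = fun γ : Γ => ∫ x, φ x ∂μ - φ γ}
  have hconv : Convex ℝ S := by
    rintro _ ⟨φ, hφ, hφi, rfl⟩ _ ⟨ψ, hψ, hψi, rfl⟩ a b ha hb -
    refine ⟨a • φ + b • ψ, (hφ.smul ha).add (hψ.smul hb), (hφi.smul a).add (hψi.smul b), ?_⟩
    ext γ
    simp only [Pi.add_apply, Pi.smul_apply, smul_eq_mul]
    rw [integral_add (hφi.const_mul a) (hψi.const_mul b), integral_const_mul, integral_const_mul]
    ring
  have hsmul : ∀ s ∈ S, ∀ t : ℝ, 0 < t → t • s ∈ S := by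
    rintro _ ⟨φ, hφ, hφi, rfl⟩ t ht
    exact ⟨t • φ, hφ.smul ht.le, hφi.smul t, by ext; simp [integral_const_mul, mul_sub]⟩
  have hgap : ∀ s ∈ S, ∃ γ, s γ ≤ 0 := by
    rintro _ ⟨φ, hφ, hφi, rfl⟩
    obtain ⟨γ, hγ, h⟩ := (hφ.subset (subset_univ _) (convex_convexHull ℝ _)
      ).exists_integral_le_of_ae_mem_convexHull hΓ hφi
    exact ⟨⟨γ, hγ⟩, sub_nonpos.2 h⟩
  obtain ⟨p, hp, hpS⟩ := exists_mem_stdSimplex_sum_mul_nonpos_of_cone hconv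
    ⟨0, convexOn_const 0 convex_univ, integrable_zero _ _ _, by ext; simp⟩ hsmul hgap
  refine ⟨p, hp, fun φ hφ hφi => ?_⟩
  have := hpS _ ⟨φ, hφ, hφi, rfl⟩
  simp only [mul_sub, Finset.sum_sub_distrib, ← Finset.sum_mul, hp.2, one_mul] at this
  linarith

theorem stmt8_general (d : ℕ) (μ : Measure (Ed d)) [IsProbabilityMeasure μ]
    (Γ : Finset (Ed d)) (hΓ : μ ((convexHull ℝ (Γ : Set (Ed d)))ᶜ) = 0) :
    ∃ ν : Measure (Ed d), IsProbabilityMeasure ν ∧ ν ((Γ : Set (Ed d))ᶜ) = 0 ∧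
      ConvexOrder μ ν := by
  obtain ⟨p, hp, hle⟩ := exists_mem_stdSimplex_integral_le_sum (mem_ae_iff.2 hΓ)
  refine ⟨weightedDirac p Subtype.val, isProbabilityMeasure_weightedDirac _ hp,
    by simpa using weightedDirac_compl_range (p := p) Subtype.val, fun φ hφ hφμ _ => ?_⟩
  rw [integral_weightedDirac _ hp.1]
  exact hle φ hφ hφμ

theorem stmt8 (d : ℕ) (μ : Measure (Ed d)) [IsProbabilityMeasure μ]
    (hcomp : ∃ K : Set (Ed d), IsCompact K ∧ μ Kᶜ = 0)
    (Γ : Finset (Ed d)) (hΓ : μ ((convexHull ℝ (Γ : Set (Ed d)))ᶜ) = 0) :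
    ∃ ν : Measure (Ed d), IsProbabilityMeasure ν ∧ ν ((Γ : Set (Ed d))ᶜ) = 0 ∧
      ConvexOrder μ ν :=
  stmt8_general d μ Γ hΓ
end
end

section
/- Let μ be a compactly supported probability measure on ℝ^d with the measurability/splitting structure of dual quantization, p ≥ 1, and N ≥ d+1. Then the L^p dual quantization error satisfies d_{p,N}(μ)^p = inf over ν ∈ P_{≥μ}(ℝ^d,N) of M_p^p(μ,ν), the infimum over measures supported on at most N points dominating μ in the convex order of the minimal p-th moment martingale transport cost. -/
open MeasureTheory Set

noncomputable section

variable {E : Type*} [NormedAddCommGroup E] [NormedSpace ℝ E] [MeasurableSpace E] [BorelSpace E]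

/-!
A finitely-valued `Y` on the extended space `Ω × [0,1]` with `E[Y | X] = X` and a martingale
coupling `π` of `μ` with a finitely supported measure carry the same information: `Y` gives
`π = law (X, Y)`, and conversely Kallenberg's randomisation lemma writes the disintegration kernel
`κ` of `π` as `κ x = law (f (x, U))` with `U` uniform on `[0,1]`, so that `Y = f (X, U)` has
`law (X, Y) = π`. The martingale condition and the cost only depend on this joint law, hence both
infima run over the same set of values. The convex order constraint comes for free: `κ x` is a
finitely supported probability with barycentre `x` for `μ`-a.e. `x`, so Jensen's inequality gives
`φ x ≤ ∫ φ dκ x`, and integrating in `μ` yields `∫ φ dμ ≤ ∫ φ dν`.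
-/

open ProbabilityTheory

instance isProbabilityMeasure_volume_restrict_Icc_zero_one :
    IsProbabilityMeasure (volume.restrict (Icc (0 : ℝ) 1)) :=
  ⟨by simp [Real.volume_Icc]⟩

lemma map_comp_fst_prod {Ω β γ : Type*} [MeasurableSpace Ω] [MeasurableSpace β]
    [MeasurableSpace γ] (P : Measure Ω) [SFinite P] (ρ : Measure γ) [IsProbabilityMeasure ρ]
    {X : Ω → β} (hX : Measurable X) : (P.prod ρ).map (fun q => X q.1) = P.map X := by
  change (P.prod ρ).map (X ∘ Prod.fst) = _
  rw [← Measure.map_map hX measurable_fst, Measure.map_fst_prod, measure_univ, one_smul]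

lemma Continuous.integrable_of_measure_compl_eq_zero {α F : Type*} [TopologicalSpace α]
    [T2Space α] [MeasurableSpace α] [OpensMeasurableSpace α] [NormedAddCommGroup F] {μ : Measure α}
    [IsFiniteMeasure μ] {f : α → F} (hf : Continuous f) {K : Set α} (hK : IsCompact K)
    (hμK : μ Kᶜ = 0) : Integrable f μ := by
  rw [← Measure.restrict_eq_self_of_ae_mem (s := K) (mem_ae_iff.2 hμK)]
  exact hf.continuousOn.integrableOn_compact hK

theorem ConvexOn.map_integral_le_of_measure_compl_finset_eq_zero {V : Type*}
    [NormedAddCommGroup V] [NormedSpace ℝ V] [CompleteSpace V] [MeasurableSpace V]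
    [MeasurableSingletonClass V] {φ : V → ℝ} (hφ : ConvexOn ℝ univ φ) {ρ : Measure V}
    [IsProbabilityMeasure ρ] {s : Finset V} (hs : ρ (↑s)ᶜ = 0) :
    φ (∫ y, y ∂ρ) ≤ ∫ y, φ y ∂ρ := by
  have h_restrict := Measure.restrict_eq_self_of_ae_mem (s := (s : Set V)) (mem_ae_iff.2 hs)
  have h_one : ∑ y ∈ s, ρ.real {y} = 1 := by
    rw [sum_measureReal_singleton, measureReal_def,
      (prob_compl_eq_zero_iff s.finite_toSet.measurableSet).1 hs, ENNReal.toReal_one]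
  rw [← h_restrict, setIntegral_finset s IntegrableOn.finset,
    setIntegral_finset s IntegrableOn.finset]
  exact hφ.map_sum_le (fun y _ => measureReal_nonneg) h_one (fun y _ => mem_univ y)

section Martingale

variable {V : Type*} [NormedAddCommGroup V] [NormedSpace ℝ V] [MeasurableSpace V]
  {π : Measure (V × V)} {μ ν : Measure V}

lemma IsMartingaleCoupling.isProbabilityMeasure_left (hπ : IsMartingaleCoupling π μ ν) :
    IsProbabilityMeasure μ := by
  obtain ⟨hπ, ⟨hfst, -⟩, -⟩ := hπ
  rw [← hfst]
  exact Measure.isProbabilityMeasure_map measurable_fst.aemeasurable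

lemma IsMartingaleCoupling.isProbabilityMeasure_right (hπ : IsMartingaleCoupling π μ ν) :
    IsProbabilityMeasure ν := by
  obtain ⟨hπ, ⟨-, hsnd⟩, -⟩ := hπ
  rw [← hsnd]
  exact Measure.isProbabilityMeasure_map measurable_snd.aemeasurable

lemma IsMartingaleCoupling.ae_measure_compl_eq_zero_of_compProd_eq
    (hπ : IsMartingaleCoupling π μ ν) {κ : Kernel V V} [IsMarkovKernel κ] (hκ : μ ⊗ₘ κ = π)
    {t : Set V} (ht : MeasurableSet t) (hνt : ν t = 0) : ∀ᵐ x ∂μ, κ x t = 0 := by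
  have := hπ.isProbabilityMeasure_left
  have h : (μ ⊗ₘ κ) (univ ×ˢ t) = 0 := by
    rw [hκ, univ_prod, ← Measure.map_apply measurable_snd ht, hπ.2.1.2, hνt]
  rwa [Measure.compProd_apply_prod .univ ht, Measure.restrict_univ,
    lintegral_eq_zero_iff (κ.measurable_coe ht)] at h

variable [CompleteSpace V]

theorem IsMartingaleCoupling.ae_integral_eq_of_compProd_eq (hπ : IsMartingaleCoupling π μ ν)
    {κ : Kernel V V} [IsMarkovKernel κ] (hκ : μ ⊗ₘ κ = π) (hμ : Integrable id μ)
    (hν : Integrable id ν) : ∀ᵐ x ∂μ, ∫ y, y ∂κ x = x := by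
  have := hπ.isProbabilityMeasure_left
  obtain ⟨-, ⟨hfst, hsnd⟩, hmart⟩ := hπ
  have hint : Integrable (fun q : V × V => q.2 - q.1) π :=
    ((hsnd ▸ hν).comp_measurable measurable_snd).sub ((hfst ▸ hμ).comp_measurable measurable_fst)
  rw [← hκ] at hint hmart
  have hzero : (fun x => ∫ y, (y - x) ∂κ x) =ᵐ[μ] 0 := by
    refine ae_eq_zero_of_forall_setIntegral_eq_of_sigmaFinite
      (fun A _ _ => hint.integral_compProd.integrableOn) (fun A hA _ => ?_)
    have := hmart A hA
    rw [Measure.setIntegral_compProd hA .univ hint.integrableOn] at this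
    simpa only [Measure.restrict_univ] using this
  filter_upwards [hzero, hint.ae_of_compProd] with x hx hx_int
  have hy : Integrable (fun y => y) (κ x) :=
    (hx_int.add (integrable_const x)).congr (ae_of_all _ fun y => sub_add_cancel y x)
  rwa [Pi.zero_apply, integral_sub hy (integrable_const x), integral_const, probReal_univ,
    one_smul, sub_eq_zero] at hx

variable [BorelSpace V] [SecondCountableTopology V]

theorem IsMartingaleCoupling.convexOrder (hπ : IsMartingaleCoupling π μ ν)
    (hμ : Integrable id μ) {s : Finset V} (hs : ν (↑s)ᶜ = 0) : ConvexOrder μ ν := by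
  intro φ hφ hφμ hφν
  have := hπ.1
  have := hπ.isProbabilityMeasure_left
  have := hπ.isProbabilityMeasure_right
  have hκ : μ ⊗ₘ π.condKernel = π := hπ.2.1.1 ▸ π.disintegrate π.condKernel
  have hbary := hπ.ae_integral_eq_of_compProd_eq hκ hμ
    (continuous_id.integrable_of_measure_compl_eq_zero s.finite_toSet.isCompact hs)
  have hsupp := hπ.ae_measure_compl_eq_zero_of_compProd_eq hκ
    s.finite_toSet.measurableSet.compl hs
  have hφπ : Integrable (fun q => φ q.2) (μ ⊗ₘ π.condKernel) := by
    rw [hκ]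
    exact (hπ.2.1.2 ▸ hφν).comp_measurable measurable_snd
  have hφbary : φ =ᵐ[μ] fun x => φ (∫ y, y ∂π.condKernel x) :=
    hbary.mono fun x hx => congrArg φ hx.symm
  calc ∫ x, φ x ∂μ = ∫ x, φ (∫ y, y ∂π.condKernel x) ∂μ := integral_congr_ae hφbary
    _ ≤ ∫ x, ∫ y, φ y ∂π.condKernel x ∂μ :=
        integral_mono_ae (hφμ.congr hφbary)
          hφπ.integral_compProd (hsupp.mono fun x hx =>
            hφ.map_integral_le_of_measure_compl_finset_eq_zero hx)
    _ = ∫ q, φ q.2 ∂(μ ⊗ₘ π.condKernel) := (Measure.integral_compProd hφπ).symm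
    _ = ∫ y, φ y ∂ν := by
        rw [hκ, ← hπ.2.1.2, integral_map measurable_snd.aemeasurable
          (hπ.2.1.2 ▸ hφν.aestronglyMeasurable)]

end Martingale

section Transfer

open unitInterval

lemma map_projIcc_volume_restrict_Icc :
    (volume.restrict (Icc (0 : ℝ) 1)).map (projIcc 0 1 zero_le_one) = (volume : Measure I) := by
  rw [← measurePreserving_coe.map_eq, Measure.map_map continuous_projIcc.measurable
    measurable_subtype_coe]
  convert Measure.map_id
  exact funext (projIcc_val zero_le_one)

lemma map_prod_eq_compProd_of_map_eq {α β γ : Type*} [MeasurableSpace α] [MeasurableSpace β]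
    [MeasurableSpace γ] (μ : Measure α) [SFinite μ] (ρ : Measure γ) [SFinite ρ]
    {κ : Kernel α β} [IsSFiniteKernel κ] {f : α → γ → β} (hf : Measurable (Function.uncurry f))
    (hfκ : ∀ a, ρ.map (f a) = κ a) :
    (μ.prod ρ).map (fun p => (p.1, f p.1 p.2)) = μ ⊗ₘ κ := by
  have hF : Measurable fun p : α × γ => (p.1, f p.1 p.2) := measurable_fst.prodMk hf
  ext B hB
  rw [Measure.map_apply hF hB, Measure.prod_apply (hF hB), Measure.compProd_apply hB]
  refine lintegral_congr fun a => ?_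
  rw [← hfκ a, Measure.map_apply hf.of_uncurry_left (measurable_prodMk_left hB)]
  rfl

theorem exists_measurable_map_prod_eq {α β Ω : Type*} [MeasurableSpace α] [MeasurableSpace β]
    [StandardBorelSpace β] [Nonempty β] [MeasurableSpace Ω] (P : Measure Ω) [SFinite P]
    {X : Ω → α} (hX : Measurable X) (π : Measure (α × β)) [IsFiniteMeasure π]
    (hfst : π.map Prod.fst = P.map X) :
    ∃ Y : Ω × ℝ → β, Measurable Y ∧
      (P.prod (volume.restrict (Icc (0 : ℝ) 1))).map (fun q => (X q.1, Y q)) = π := by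
  obtain ⟨f, hf, hfκ⟩ := π.condKernel.exists_measurable_map_eq_unitInterval
  have hproj : Measurable (projIcc (0 : ℝ) 1 zero_le_one) := continuous_projIcc.measurable
  refine ⟨fun q => f (X q.1) (projIcc 0 1 zero_le_one q.2),
    hf.comp ((hX.comp measurable_fst).prodMk (hproj.comp measurable_snd)), ?_⟩
  have hF : Measurable fun p : α × I => (p.1, f p.1 p.2) := measurable_fst.prodMk hf
  calc (P.prod (volume.restrict (Icc (0 : ℝ) 1))).map
        (fun q => (X q.1, f (X q.1) (projIcc 0 1 zero_le_one q.2)))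
      = ((P.prod (volume.restrict (Icc (0 : ℝ) 1))).map
          (Prod.map X (projIcc 0 1 zero_le_one))).map (fun p => (p.1, f p.1 p.2)) := by
        rw [Measure.map_map hF (hX.prodMap hproj)]
        rfl
    _ = ((P.map X).prod volume).map (fun p => (p.1, f p.1 p.2)) := by
        rw [← Measure.map_prod_map _ _ hX hproj, map_projIcc_volume_restrict_Icc]
    _ = π := by
        rw [map_prod_eq_compProd_of_map_eq _ _ hf hfκ, ← hfst]
        exact π.disintegrate π.condKernel

theorem exists_measurable_range_subset_map_prod_eq {α β Ω : Type*} [MeasurableSpace α]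
    [MeasurableSpace β] [StandardBorelSpace β] [Nonempty β] [MeasurableSingletonClass β]
    [MeasurableSpace Ω] (P : Measure Ω) [IsProbabilityMeasure P] {X : Ω → α} (hX : Measurable X)
    (π : Measure (α × β)) [IsFiniteMeasure π] (hfst : π.map Prod.fst = P.map X) {s : Finset β}
    (hs : π.map Prod.snd (↑s)ᶜ = 0) :
    ∃ Y : Ω × ℝ → β, Measurable Y ∧ range Y ⊆ s ∧
      (P.prod (volume.restrict (Icc (0 : ℝ) 1))).map (fun q => (X q.1, Y q)) = π := by
  classical
  obtain ⟨Y, hY, hlaw⟩ := exists_measurable_map_prod_eq P hX π hfst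
  have hs_meas : MeasurableSet (s : Set β) := s.finite_toSet.measurableSet
  rw [Measure.map_apply measurable_snd hs_meas.compl] at hs
  obtain ⟨y₀, hy₀⟩ : s.Nonempty := by
    rw [Finset.nonempty_iff_ne_empty]
    rintro rfl
    have h := congrArg (· univ) hfst
    simp only [Measure.map_apply measurable_fst .univ, Measure.map_apply hX .univ,
      preimage_univ, measure_univ] at h
    simp [h] at hs
  have hpair : Measurable fun q : Ω × ℝ => (X q.1, Y q) := (hX.comp measurable_fst).prodMk hY
  -- `Y` lies in `s` only almost surely; send the exceptional null set to a point of `s`.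
  refine ⟨fun q => if Y q ∈ s then Y q else y₀, .ite (hY hs_meas) hY measurable_const, ?_, ?_⟩
  · rintro _ ⟨q, rfl⟩
    dsimp only
    split_ifs with h
    exacts [h, hy₀]
  · rw [← hlaw]
    refine Measure.map_congr ?_
    have h : ∀ᵐ q ∂(P.prod (volume.restrict (Icc (0 : ℝ) 1))), Y q ∈ s := by
      rw [ae_iff, ← hs, ← hlaw, Measure.map_apply hpair (measurable_snd hs_meas.compl)]
      rfl
    filter_upwards [h] with q hq
    simp only [if_pos hq]

end Transfer

section PairLaw

variable {V Ω : Type*} [NormedAddCommGroup V] [MeasurableSpace V] [BorelSpace V]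
  [SecondCountableTopology V] [MeasurableSpace Ω] {ρ : Measure Ω} {X Y : Ω → V}

lemma pCost_map_prod (p : ℝ) (hX : Measurable X) (hY : Measurable Y) :
    pCost p (ρ.map fun ω => (X ω, Y ω)) = ∫ ω, ‖X ω - Y ω‖ ^ p ∂ρ := by
  rw [pCost, integral_map (f := fun q : V × V => ‖q.2 - q.1‖ ^ p) (hX.prodMk hY).aemeasurable
    ((measurable_snd.sub measurable_fst).norm.pow_const p).aestronglyMeasurable]
  simp_rw [norm_sub_rev]

variable [NormedSpace ℝ V]

lemma setIntegral_map_prod_sub (hX : Measurable X) (hY : Measurable Y) {A : Set V}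
    (hA : MeasurableSet A) :
    ∫ q in A ×ˢ univ, (q.2 - q.1) ∂(ρ.map fun ω => (X ω, Y ω)) =
      ∫ ω in X ⁻¹' A, (Y ω - X ω) ∂ρ := by
  rw [setIntegral_map (f := fun q : V × V => q.2 - q.1) (hA.prod .univ)
    (continuous_snd.sub continuous_fst).aestronglyMeasurable (hX.prodMk hY).aemeasurable,
    prod_univ]
  rfl

lemma isMartingaleCoupling_map_prod [IsProbabilityMeasure ρ] (hX : Measurable X)
    (hY : Measurable Y) (hmart : ∀ A, MeasurableSet A → ∫ ω in X ⁻¹' A, (Y ω - X ω) ∂ρ = 0) :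
    IsMartingaleCoupling (ρ.map fun ω => (X ω, Y ω)) (ρ.map X) (ρ.map Y) :=
  ⟨Measure.isProbabilityMeasure_map (hX.prodMk hY).aemeasurable,
    ⟨Measure.map_map measurable_fst (hX.prodMk hY), Measure.map_map measurable_snd (hX.prodMk hY)⟩,
    fun A hA => (setIntegral_map_prod_sub hX hY hA).trans (hmart A hA)⟩

end PairLaw

theorem stmt9_general (d N : ℕ) (p : ℝ)
    (Ω : Type) [MeasurableSpace Ω] (P : Measure Ω) [IsProbabilityMeasure P]
    (X : Ω → Ed d) (hX : Measurable X)
    (μ : Measure (Ed d)) (hμ : μ = P.map X)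
    (hcomp : ∃ K : Set (Ed d), IsCompact K ∧ μ Kᶜ = 0) :
    sInf {c | ∃ Y : Ω × ℝ → Ed d, Measurable Y ∧
        (∃ s : Finset (Ed d), s.card ≤ N ∧ Set.range Y ⊆ (s : Set (Ed d))) ∧
        (∀ A : Set (Ed d), MeasurableSet A →
          ∫ ω in (fun ω : Ω × ℝ => X ω.1) ⁻¹' A, (Y ω - X ω.1)
              ∂(P.prod (volume.restrict (Icc (0:ℝ) 1))) = 0) ∧
        c = ∫ ω, ‖X ω.1 - Y ω‖ ^ p ∂(P.prod (volume.restrict (Icc (0:ℝ) 1)))}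
      = sInf {c | ∃ ν : Measure (Ed d), IsProbabilityMeasure ν ∧ SuppLE N ν ∧
          ConvexOrder μ ν ∧
          ∃ π : Measure (Ed d × Ed d), IsMartingaleCoupling π μ ν ∧ c = pCost p π} := by
  subst hμ
  obtain ⟨K, hK, hμK⟩ := hcomp
  have hX₁ : Measurable fun q : Ω × ℝ => X q.1 := hX.comp measurable_fst
  have := Measure.isProbabilityMeasure_map (μ := P) hX.aemeasurable
  refine congrArg sInf (Set.ext fun c => ⟨?_, ?_⟩)
  · rintro ⟨Y, hY, ⟨s, hs_card, hY_range⟩, hmart, rfl⟩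
    have hπ := isMartingaleCoupling_map_prod hX₁ hY hmart
    rw [map_comp_fst_prod P _ hX] at hπ
    have hν : (P.prod (volume.restrict (Icc (0:ℝ) 1))).map Y (↑s)ᶜ = 0 := by
      rw [Measure.map_apply hY s.finite_toSet.measurableSet.compl,
        preimage_eq_empty (disjoint_compl_left_iff_subset.2 hY_range), measure_empty]
    exact ⟨_, hπ.isProbabilityMeasure_right, ⟨s, hs_card, hν⟩,
      hπ.convexOrder (continuous_id.integrable_of_measure_compl_eq_zero hK hμK) hν, _, hπ,
      (pCost_map_prod p hX₁ hY).symm⟩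
  · rintro ⟨ν, -, ⟨s, hs_card, hνs⟩, -, π, hπ, rfl⟩
    have := hπ.1
    obtain ⟨Y, hY, hY_range, hlaw⟩ :=
      exists_measurable_range_subset_map_prod_eq P hX π hπ.2.1.1 (hπ.2.1.2 ▸ hνs)
    refine ⟨Y, hY, ⟨s, hs_card, hY_range⟩, fun A hA => ?_, ?_⟩
    · rw [← setIntegral_map_prod_sub hX₁ hY hA, hlaw]
      exact hπ.2.2 A hA
    · rw [← pCost_map_prod p hX₁ hY, hlaw]

theorem stmt9 (d N : ℕ) (hN : d + 1 ≤ N) (p : ℝ) (hp : 1 ≤ p)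
    (Ω : Type) [MeasurableSpace Ω] (P : Measure Ω) [IsProbabilityMeasure P]
    (X : Ω → Ed d) (hX : Measurable X)
    (μ : Measure (Ed d)) (hμ : μ = P.map X)
    (hcomp : ∃ K : Set (Ed d), IsCompact K ∧ μ Kᶜ = 0) :
    sInf {c | ∃ Y : Ω × ℝ → Ed d, Measurable Y ∧
        (∃ s : Finset (Ed d), s.card ≤ N ∧ Set.range Y ⊆ (s : Set (Ed d))) ∧
        (∀ A : Set (Ed d), MeasurableSet A →
          ∫ ω in (fun ω : Ω × ℝ => X ω.1) ⁻¹' A, (Y ω - X ω.1)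
              ∂(P.prod (volume.restrict (Icc (0:ℝ) 1))) = 0) ∧
        c = ∫ ω, ‖X ω.1 - Y ω‖ ^ p ∂(P.prod (volume.restrict (Icc (0:ℝ) 1)))}
      = sInf {c | ∃ ν : Measure (Ed d), IsProbabilityMeasure ν ∧ SuppLE N ν ∧
          ConvexOrder μ ν ∧
          ∃ π : Measure (Ed d × Ed d), IsMartingaleCoupling π μ ν ∧ c = pCost p π} :=
  stmt9_general d N p Ω P X hX μ hμ hcomp
end
end

section
/- Let Γ be an L²-optimal dual N-quantization grid of a compactly supported μ on ℝ^d, with μ̌ the law of the corresponding dual quantization. Then for every probability measure η with μ ≤_cvx η ≤_cvx μ̌, Γ remains an L²-optimal dual N-quantization grid for η, and d_{2,N}(η)² = M₂²(η, μ̌) = ∫|y|² μ̌(dy) − ∫|x|² η(dx). -/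
open MeasureTheory Set

noncomputable section

variable {E : Type*} [NormedAddCommGroup E] [NormedSpace ℝ E] [MeasurableSpace E] [BorelSpace E]

/-!
A convex-order upper bound `η ≤_cvx μ̌` with `μ̌` carried by `Γ` forces `η` to be carried by the
compact set `conv Γ`: the distance to `conv Γ` is convex and vanishes `μ̌`-a.e. Hence every convex
function is `η`-integrable, so the convex order is transitive through `η` and every `ν` with
`η ≤_cvx ν` also satisfies `μ ≤_cvx ν`. So the optimality of `μ̌` for `μ` makes `μ̌` optimal for
`η`, both among measures on at most `N` points and among those carried by `Γ`.
-/

section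

variable {V : Type*} [NormedAddCommGroup V] [NormedSpace ℝ V]

theorem convexOn_infDist {K : Set V} (hK : Convex ℝ K) (hKne : K.Nonempty) :
    ConvexOn ℝ univ fun x => Metric.infDist x K := by
  refine ⟨convex_univ, fun x _ y _ a b ha hb hab => le_of_forall_pos_le_add fun ε hε => ?_⟩
  obtain ⟨p, hp, hxp⟩ := (Metric.infDist_lt_iff hKne).mp (lt_add_of_pos_right
    (Metric.infDist x K) (half_pos hε))
  obtain ⟨q, hq, hyq⟩ := (Metric.infDist_lt_iff hKne).mp (lt_add_of_pos_right
    (Metric.infDist y K) (half_pos hε))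
  calc Metric.infDist (a • x + b • y) K ≤ dist (a • x + b • y) (a • p + b • q) :=
        Metric.infDist_le_dist_of_mem (hK hp hq ha hb hab)
    _ ≤ dist (a • x) (a • p) + dist (b • y) (b • q) := dist_add_add_le _ _ _ _
    _ = a * dist x p + b * dist y q := by
        rw [dist_smul₀, dist_smul₀, Real.norm_of_nonneg ha, Real.norm_of_nonneg hb]
    _ ≤ a • Metric.infDist x K + b • Metric.infDist y K + ε := by
        simp only [smul_eq_mul]
        nlinarith [mul_le_mul_of_nonneg_left hxp.le ha, mul_le_mul_of_nonneg_left hyq.le hb]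

variable [MeasurableSpace V]

/-- `d_{2,N}(η)²` for `P = SuppLE N`; for `P ν := ν Γᶜ = 0` it is the error of the grid `Γ`. -/
def dualQuantErrSq (P : Measure V → Prop) (η : Measure V) : ℝ :=
  sInf {c | ∃ ν : Measure V, IsProbabilityMeasure ν ∧ P ν ∧ ConvexOrder η ν ∧
    c = ∫ y, ‖y‖ ^ (2 : ℝ) ∂ν - ∫ x, ‖x‖ ^ (2 : ℝ) ∂η}

theorem dualQuantErrSq_eq_of_isMinimizer {P : Measure V → Prop} {η μc : Measure V}
    [IsProbabilityMeasure μc] (hPμc : P μc) (hημc : ConvexOrder η μc)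
    (hmin : ∀ ν : Measure V, IsProbabilityMeasure ν → P ν → ConvexOrder η ν →
      ∫ y, ‖y‖ ^ (2 : ℝ) ∂μc ≤ ∫ y, ‖y‖ ^ (2 : ℝ) ∂ν) :
    dualQuantErrSq P η = ∫ y, ‖y‖ ^ (2 : ℝ) ∂μc - ∫ x, ‖x‖ ^ (2 : ℝ) ∂η := by
  refine IsLeast.csInf_eq ⟨⟨μc, inferInstance, hPμc, hημc, rfl⟩, ?_⟩
  rintro _ ⟨ν, hν, hPν, hην, rfl⟩
  exact sub_le_sub_right (hmin ν hν hPν hην) _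

variable [BorelSpace V]

theorem ConvexOrder.ae_mem_of_ae_mem {η ν : Measure V} [IsFiniteMeasure η] {K : Set V}
    (hKconv : Convex ℝ K) (hKclosed : IsClosed K) (hKne : K.Nonempty)
    (hη : Integrable (fun x => ‖x‖) η) (hνK : ∀ᵐ y ∂ν, y ∈ K) (hην : ConvexOrder η ν) :
    ∀ᵐ x ∂η, x ∈ K := by
  set φ : V → ℝ := fun x => Metric.infDist x K
  have hφν : φ =ᵐ[ν] 0 := hνK.mono fun y hy => Metric.infDist_zero_of_mem hy
  have hφη : Integrable φ η := by
    refine ((integrable_const (Metric.infDist 0 K)).add hη).mono'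
      (Metric.continuous_infDist_pt K).aestronglyMeasurable (ae_of_all _ fun x => ?_)
    rw [Real.norm_of_nonneg Metric.infDist_nonneg]
    simpa only [Pi.add_apply, dist_zero_right] using
      Metric.infDist_le_infDist_add_dist (x := x) (y := 0) (s := K)
  have hφη_le : ∫ x, φ x ∂η ≤ 0 := by
    simpa [integral_congr_ae hφν] using
      hην φ (convexOn_infDist hKconv hKne) hφη ((integrable_zero _ _ _).congr hφν.symm)
  have hφη_zero : φ =ᵐ[η] 0 := (integral_eq_zero_iff_of_nonneg (fun _ => Metric.infDist_nonneg)
    hφη).mp (hφη_le.antisymm (integral_nonneg fun _ => Metric.infDist_nonneg))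
  filter_upwards [hφη_zero] with x hx
  exact (hKclosed.mem_iff_infDist_zero hKne).mpr hx

/-- Convex functions on a finite-dimensional space are continuous, hence integrable for a finite
measure carried by a compact set. -/
theorem ConvexOrder.trans_of_ae_mem_isCompact [FiniteDimensional ℝ V] {μ η ν : Measure V}
    [IsFiniteMeasure η] {K : Set V} (hK : IsCompact K) (hηK : ∀ᵐ x ∂η, x ∈ K)
    (hμη : ConvexOrder μ η) (hην : ConvexOrder η ν) : ConvexOrder μ ν := by
  intro ψ hψ hψμ hψν
  have hψη : Integrable ψ η := by
    rw [← Measure.restrict_eq_self_of_ae_mem hηK]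
    exact (hψ.continuousOn isOpen_univ).mono (subset_univ K) |>.integrableOn_compact hK
  exact (hμη ψ hψ hψμ hψη).trans (hην ψ hψ hψη hψν)

end

theorem stmt11_general (d N : ℕ) (μ : Measure (Ed d))
    (Γ : Finset (Ed d)) (hΓcard : Γ.card ≤ N)
    (μc : Measure (Ed d)) [IsProbabilityMeasure μc]
    (hμcΓ : μc ((Γ : Set (Ed d))ᶜ) = 0)
    (hopt : ∫ y, ‖y‖ ^ (2 : ℝ) ∂μc
      = sInf {c | ∃ ν : Measure (Ed d), IsProbabilityMeasure ν ∧ SuppLE N ν ∧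
          ConvexOrder μ ν ∧ c = ∫ y, ‖y‖ ^ (2 : ℝ) ∂ν})
    (η : Measure (Ed d)) [IsProbabilityMeasure η]
    (hη2 : Integrable (fun x => ‖x‖ ^ (2 : ℝ)) η)
    (hμη : ConvexOrder μ η) (hημc : ConvexOrder η μc) :
    sInf {c | ∃ ν : Measure (Ed d), IsProbabilityMeasure ν ∧ ν ((Γ : Set (Ed d))ᶜ) = 0 ∧
        ConvexOrder η ν ∧ c = ∫ y, ‖y‖ ^ (2 : ℝ) ∂ν - ∫ x, ‖x‖ ^ (2 : ℝ) ∂η}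
      = sInf {c | ∃ ν : Measure (Ed d), IsProbabilityMeasure ν ∧ SuppLE N ν ∧
          ConvexOrder η ν ∧ c = ∫ y, ‖y‖ ^ (2 : ℝ) ∂ν - ∫ x, ‖x‖ ^ (2 : ℝ) ∂η} ∧
      sInf {c | ∃ ν : Measure (Ed d), IsProbabilityMeasure ν ∧ SuppLE N ν ∧
          ConvexOrder η ν ∧ c = ∫ y, ‖y‖ ^ (2 : ℝ) ∂ν - ∫ x, ‖x‖ ^ (2 : ℝ) ∂η}
        = ∫ y, ‖y‖ ^ (2 : ℝ) ∂μc - ∫ x, ‖x‖ ^ (2 : ℝ) ∂η := by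
  have hμcΓae : ∀ᵐ y ∂μc, y ∈ (Γ : Set (Ed d)) := mem_ae_iff.mpr hμcΓ
  have hK : IsCompact (convexHull ℝ (Γ : Set (Ed d))) := Γ.finite_toSet.isCompact_convexHull ℝ
  have hη1 : Integrable (fun x => ‖x‖) η := by
    simpa using integrable_norm_rpow_of_le aestronglyMeasurable_id zero_le_one zero_le_two
      one_le_two hη2
  have hηK : ∀ᵐ x ∂η, x ∈ convexHull ℝ (Γ : Set (Ed d)) :=
    hημc.ae_mem_of_ae_mem (convex_convexHull ℝ _) hK.isClosed
      (convexHull_nonempty_iff.mpr hμcΓae.exists) hη1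
      (hμcΓae.mono fun _ hy => subset_convexHull ℝ _ hy)
  have hmin : ∀ ν : Measure (Ed d), IsProbabilityMeasure ν → SuppLE N ν → ConvexOrder η ν →
      ∫ y, ‖y‖ ^ (2 : ℝ) ∂μc ≤ ∫ y, ‖y‖ ^ (2 : ℝ) ∂ν := fun ν hν hνN hην =>
    hopt ▸ csInf_le ⟨0, by rintro _ ⟨ν', -, -, -, rfl⟩; positivity⟩
      ⟨ν, hν, hνN, hμη.trans_of_ae_mem_isCompact hK hηK hην, rfl⟩
  have hN : dualQuantErrSq (SuppLE N) η = _ :=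
    dualQuantErrSq_eq_of_isMinimizer ⟨Γ, hΓcard, hμcΓ⟩ hημc hmin
  have hΓ : dualQuantErrSq (fun ν => ν (Γ : Set (Ed d))ᶜ = 0) η = _ :=
    dualQuantErrSq_eq_of_isMinimizer hμcΓ hημc fun ν hν hνΓ => hmin ν hν ⟨Γ, hΓcard, hνΓ⟩
  exact ⟨hΓ.trans hN.symm, hN⟩

theorem stmt11 (d N : ℕ) (μ : Measure (Ed d)) [IsProbabilityMeasure μ]
    (hcomp : ∃ K : Set (Ed d), IsCompact K ∧ μ Kᶜ = 0)
    (Γ : Finset (Ed d)) (hΓcard : Γ.card ≤ N)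
    (μc : Measure (Ed d)) [IsProbabilityMeasure μc]
    (hμcΓ : μc ((Γ : Set (Ed d))ᶜ) = 0) (hμμc : ConvexOrder μ μc)
    (hopt : ∫ y, ‖y‖ ^ (2 : ℝ) ∂μc
      = sInf {c | ∃ ν : Measure (Ed d), IsProbabilityMeasure ν ∧ SuppLE N ν ∧
          ConvexOrder μ ν ∧ c = ∫ y, ‖y‖ ^ (2 : ℝ) ∂ν})
    (η : Measure (Ed d)) [IsProbabilityMeasure η]
    (hη2 : Integrable (fun x => ‖x‖ ^ (2 : ℝ)) η)
    (hμη : ConvexOrder μ η) (hημc : ConvexOrder η μc) :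
    sInf {c | ∃ ν : Measure (Ed d), IsProbabilityMeasure ν ∧ ν ((Γ : Set (Ed d))ᶜ) = 0 ∧
        ConvexOrder η ν ∧ c = ∫ y, ‖y‖ ^ (2 : ℝ) ∂ν - ∫ x, ‖x‖ ^ (2 : ℝ) ∂η}
      = sInf {c | ∃ ν : Measure (Ed d), IsProbabilityMeasure ν ∧ SuppLE N ν ∧
          ConvexOrder η ν ∧ c = ∫ y, ‖y‖ ^ (2 : ℝ) ∂ν - ∫ x, ‖x‖ ^ (2 : ℝ) ∂η} ∧
      sInf {c | ∃ ν : Measure (Ed d), IsProbabilityMeasure ν ∧ SuppLE N ν ∧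
          ConvexOrder η ν ∧ c = ∫ y, ‖y‖ ^ (2 : ℝ) ∂ν - ∫ x, ‖x‖ ^ (2 : ℝ) ∂η}
        = ∫ y, ‖y‖ ^ (2 : ℝ) ∂μc - ∫ x, ‖x‖ ^ (2 : ℝ) ∂η :=
  stmt11_general d N μ Γ hΓcard μc hμcΓ hopt η hη2 hμη hημc
end
end
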